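/- arXiv:2305.18959 — 10 statements merged into one kernel-verified Lean document; each statement's English description precedes it below -/
import Mathlib

section
/- Let a : ℕ → ℝ be an arbitrary sequence (indexed from 1) and define A : ℕ → ℝ recursively by A(0) = 1 and A(N) = (1/N) ∑_{n=1}^{N} a(n)·A(N−n) for N ≥ 1; set A(−1) = 0 by convention. Then for every N ≥ 1 one has A(N) − A(N−1) = (1/N) ∑_{n=1}^{N} (a(n) − 1)·(A(N−n) − A(N−n−1)). -/
/-- The delta recursion for the ideal-Bose-gas cycle recursion: if `A 0 = 1`, `A (-1) = 0`
and `A N = (1/N) ∑_{n=1}^N a n * A (N - n)` for `N ≥ 1`, then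
`A N - A (N-1) = (1/N) ∑_{n=1}^N (a n - 1) * (A (N-n) - A (N-n-1))`. -/
theorem delta_recursion (a : ℕ → ℝ) (A : ℤ → ℝ)
    (hA0 : A 0 = 1) (hAneg : A (-1) = 0)
    (hrec : ∀ N : ℕ, 1 ≤ N →
      A N = (1 / (N : ℝ)) * ∑ n ∈ Finset.Icc 1 N, a n * A ((N : ℤ) - n)) :
    ∀ N : ℕ, 1 ≤ N →
      A N - A ((N : ℤ) - 1) =
        (1 / (N : ℝ)) * ∑ n ∈ Finset.Icc 1 N,
          (a n - 1) * (A ((N : ℤ) - n) - A ((N : ℤ) - n - 1)) := by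
  intro N hN
  obtain ⟨M, rfl⟩ : ∃ M, N = M + 1 := ⟨N - 1, by omega⟩
  have hNR : ((M : ℝ) + 1) ≠ 0 := by positivity
  -- main recursion at M+1
  have h1 : ((M : ℝ) + 1) * A ((M : ℤ) + 1)
      = ∑ n ∈ Finset.Icc 1 (M + 1), a n * A ((M : ℤ) + 1 - n) := by
    have := hrec (M + 1) (by omega)
    push_cast at this
    rw [this]; field_simp
  -- recursion at M (or trivially if M = 0)
  have h2 : (M : ℝ) * A (M : ℤ) = ∑ n ∈ Finset.Icc 1 M, a n * A ((M : ℤ) - n) := by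
    rcases Nat.eq_zero_or_pos M with h | h
    · subst h; simp
    · have := hrec M h
      rw [this]; field_simp
  -- split shifted sum
  have h4 : ∑ n ∈ Finset.Icc 1 (M + 1), a n * A ((M : ℤ) + 1 - n - 1)
      = ∑ n ∈ Finset.Icc 1 M, a n * A ((M : ℤ) - n) := by
    rw [Finset.sum_Icc_succ_top (by omega : 1 ≤ M + 1)]
    have : A ((M : ℤ) + 1 - (M + 1 : ℕ) - 1) = 0 := by push_cast; simpa using hAneg
    rw [this]
    simp only [mul_zero, add_zero]
    apply Finset.sum_congr rfl
    intro n hn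
    congr 1
    ring_nf
  -- telescoping sum
  have h3 : ∑ n ∈ Finset.Icc 1 (M + 1), (A ((M : ℤ) + 1 - n) - A ((M : ℤ) + 1 - n - 1))
      = A (M : ℤ) := by
    rw [← Finset.Ico_add_one_right_eq_Icc, Finset.sum_Ico_eq_sum_range]
    simp only [Nat.add_sub_cancel, Nat.succ_sub_one]
    have hc : ∀ k ∈ Finset.range (M + 1),
        A ((M : ℤ) + 1 - ((1 + k : ℕ) : ℤ)) - A ((M : ℤ) + 1 - ((1 + k : ℕ) : ℤ) - 1)
          = (fun j : ℕ => A (j : ℤ) - A ((j : ℤ) - 1)) (M + 1 - 1 - k) := by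
      intro k hk
      have hkM : k ≤ M := by simpa [Nat.lt_succ_iff] using hk
      simp only
      have : ((M + 1 - 1 - k : ℕ) : ℤ) = (M : ℤ) - k := by omega
      rw [this]
      push_cast
      ring_nf
    rw [Finset.sum_congr rfl hc,
      Finset.sum_range_reflect (fun j : ℕ => A (j : ℤ) - A ((j : ℤ) - 1)) (M + 1)]
    have := Finset.sum_range_sub (fun j : ℕ => A ((j : ℤ) - 1)) (M + 1)
    calc ∑ j ∈ Finset.range (M + 1), (A (j : ℤ) - A ((j : ℤ) - 1))
        = ∑ j ∈ Finset.range (M + 1), (A (((j + 1 : ℕ) : ℤ) - 1) - A ((j : ℤ) - 1)) := by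
          apply Finset.sum_congr rfl; intro j _; push_cast; ring_nf
      _ = A (((M + 1 : ℕ) : ℤ) - 1) - A (((0 : ℕ) : ℤ) - 1) := this
      _ = A (M : ℤ) := by push_cast; simp [hAneg]
  -- conclude
  push_cast
  have hexp : ∑ n ∈ Finset.Icc 1 (M + 1),
      (a n - 1) * (A ((M : ℤ) + 1 - n) - A ((M : ℤ) + 1 - n - 1))
      = (∑ n ∈ Finset.Icc 1 (M + 1), a n * A ((M : ℤ) + 1 - n))
        - (∑ n ∈ Finset.Icc 1 (M + 1), a n * A ((M : ℤ) + 1 - n - 1))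
        - ∑ n ∈ Finset.Icc 1 (M + 1), (A ((M : ℤ) + 1 - n) - A ((M : ℤ) + 1 - n - 1)) := by
    rw [← Finset.sum_sub_distrib, ← Finset.sum_sub_distrib]
    apply Finset.sum_congr rfl
    intro n _
    ring
  rw [eq_comm, div_mul_eq_mul_div, div_eq_iff hNR, eq_comm]
  rw [hexp, h4, h3, ← h1]
  have : A ((M : ℤ) + 1 - 1) = A (M : ℤ) := by ring_nf
  rw [this]
  linarith [h2]
end

section
/- Let a : ℕ → ℝ satisfy a(n) > 1 for every n ≥ 1, and define A : ℕ → ℝ by A(0) = 1 and A(N) = (1/N) ∑_{n=1}^{N} a(n)·A(N−n) for N ≥ 1. Then A is strictly increasing: A(N) > A(N−1) for every N ≥ 1. -/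
/-- Telescoping sum used in the main proof. -/
lemma recursion_tel (A : ℕ → ℝ) (M : ℕ) :
    ∑ n ∈ Finset.Icc 1 M, (A (M + 1 - n) - A (M - n)) = A M - A 0 := by
  rw [← Finset.Ico_add_one_right_eq_Icc, Finset.sum_Ico_eq_sum_range]
  have h1 : ∀ i ∈ Finset.range (M + 1 - 1), A (M + 1 - (1 + i)) - A (M - (1 + i))
      = (fun j => A (j + 1) - A j) (M - 1 - i) := by
    intro i hi
    simp only [Finset.mem_range] at hi
    have e1 : M + 1 - (1 + i) = M - 1 - i + 1 := by omega
    have e2 : M - (1 + i) = M - 1 - i := by omega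
    rw [e1, e2]
  rw [Finset.sum_congr rfl h1]
  have : M + 1 - 1 = M := by omega
  rw [this, Finset.sum_range_reflect (fun j => A (j + 1) - A j) M,
    Finset.sum_range_sub (fun j => A j) M]

/-- If `a n > 1` for all `n ≥ 1` and `A 0 = 1`,
`A N = (1/N) ∑_{n=1}^N a n * A (N - n)` for `N ≥ 1`, then `A` is strictly increasing. -/
theorem recursion_strict_mono (a : ℕ → ℝ) (ha : ∀ n, 1 ≤ n → 1 < a n)
    (A : ℕ → ℝ) (hA0 : A 0 = 1)
    (hrec : ∀ N, 1 ≤ N →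
      A N = (1 / (N : ℝ)) * ∑ n ∈ Finset.Icc 1 N, a n * A (N - n)) :
    ∀ N, 1 ≤ N → A (N - 1) < A N := by
  intro N
  induction N using Nat.strong_induction_on with
  | _ N IH =>
    intro hN
    -- multiplied recursion
    have hmul : ∀ K : ℕ, 1 ≤ K → (K : ℝ) * A K = ∑ n ∈ Finset.Icc 1 K, a n * A (K - n) := by
      intro K hK
      rw [hrec K hK]
      have : (K : ℝ) ≠ 0 := by positivity
      field_simp
    rcases Nat.lt_or_ge N 2 with h2 | h2
    · -- N = 1
      have hN1 : N = 1 := by omega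
      subst hN1
      have h := hrec 1 le_rfl
      simp [hA0] at h
      have := ha 1 le_rfl
      simpa [hA0, h] using this
    · -- N = M + 1 with M ≥ 1
      set M := N - 1 with hMdef
      have hM1 : 1 ≤ M := by omega
      have hNM : N = M + 1 := by omega
      have hNA : (N : ℝ) * A N = ∑ n ∈ Finset.Icc 1 M, a n * A (N - n) + a N * A 0 := by
        rw [hmul N hN, hNM, Finset.sum_Icc_succ_top (by omega : 1 ≤ M + 1)]
        simp
      have hMA : (M : ℝ) * A M = ∑ n ∈ Finset.Icc 1 M, a n * A (M - n) := hmul M hM1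
      -- termwise bound
      have hterm : ∀ n ∈ Finset.Icc 1 M,
          a n * A (M - n) + (A (M + 1 - n) - A (M - n)) ≤ a n * A (N - n) := by
        intro n hn
        simp only [Finset.mem_Icc] at hn
        have hlt : A (M - n) < A (N - n) := by
          have h1 : 1 ≤ N - n := by omega
          have h2 : N - n < N := by omega
          have := IH (N - n) h2 h1
          have e : N - n - 1 = M - n := by omega
          rwa [e] at this
        have hNn : M + 1 - n = N - n := by omega
        rw [hNn]
        have han : 1 < a n := ha n hn.1
        nlinarith [hlt]
      have hsum := Finset.sum_le_sum hterm
      rw [Finset.sum_add_distrib, recursion_tel A M, ← hMA] at hsum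
      have haN : 1 < a N := ha N (by omega)
      have hfinal : (N : ℝ) * A M < (N : ℝ) * A N := by
        have hNcast : (N : ℝ) = (M : ℝ) + 1 := by rw [hNM]; push_cast; ring
        rw [hNA, hNcast, hA0]
        nlinarith [hsum]
      have hNpos : (0 : ℝ) < (N : ℝ) := by positivity
      exact lt_of_mul_lt_mul_left hfinal hNpos.le
end

section
/- Let a : ℕ → ℝ satisfy a(n) > 1 for every n ≥ 1, and define A : ℕ → ℝ by A(0) = 1 and A(N) = (1/N) ∑_{n=1}^{N} a(n)·A(N−n) for N ≥ 1. Then for every N ≥ 1, A(N) − A(N−1) ≥ (a(1) − 1)^N / N!, and consequently A(N) ≥ ∑_{M=0}^{N} (a(1) − 1)^M / M! for every N ≥ 0 (so lim inf_{N→∞} A(N) ≥ exp(a(1) − 1)). -/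
/-!
In terms of generating functions the recursion says `A' = a A` for `A = ∑ A(N) xᴺ` and
`a = ∑ a(n+1) xⁿ`. Then `B = (1 - x) A`, whose coefficients are the increments `A(N) - A(N-1)`,
solves `B' = b B` with `b = a - 1/(1 - x) = ∑ (a(n+1) - 1) xⁿ`. Since `b` has nonnegative
coefficients, `B` dominates coefficientwise the solution `exp ((a(1) - 1) x)` of `B' = b(0) B`;
summing the increments gives the bound on `A(N)` by the partial sums of `exp (a(1) - 1)`.
-/

open Finset Filter PowerSeries
open scoped Nat

theorem Finset.Nat.sum_Icc_sub_eq_sum_antidiagonal {M : Type*} [AddCommMonoid M]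
    (f : ℕ → ℕ → M) (N : ℕ) :
    ∑ n ∈ Icc 1 (N + 1), f n (N + 1 - n) = ∑ p ∈ antidiagonal N, f (p.1 + 1) p.2 := by
  have hshift : ∑ k ∈ Ico 0 (N + 1), f (k + 1) (N - k)
      = ∑ k ∈ Ico 0 (N + 1), (fun n => f n (N + 1 - n)) (k + 1) :=
    sum_congr rfl fun k _ => by simp
  rw [Nat.sum_antidiagonal_eq_sum_range_succ (fun i j => f (i + 1) j), range_eq_Ico, hshift,
    sum_Ico_add' (fun n => f n (N + 1 - n))]
  rfl

namespace PowerSeries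

theorem coeff_one_sub_X_mul_succ {R : Type*} [Ring R] (f : R⟦X⟧) (n : ℕ) :
    coeff (n + 1) ((1 - X) * f) = coeff (n + 1) f - coeff n f := by
  rw [sub_mul, one_mul, map_sub, coeff_succ_X_mul]

theorem sum_range_coeff_one_sub_X_mul {R : Type*} [Ring R] (f : R⟦X⟧) (N : ℕ) :
    ∑ k ∈ range (N + 1), coeff k ((1 - X) * f) = coeff N f := by
  induction N with
  | zero => simp [sub_mul]
  | succ n ih => rw [sum_range_succ, ih, coeff_one_sub_X_mul_succ, add_sub_cancel]

theorem derivative_one_sub_X_mul {R : Type*} [CommRing R] {A a : R⟦X⟧}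
    (h : d⁄dX R A = a * A) :
    d⁄dX R ((1 - X) * A) = (a - mk 1) * ((1 - X) * A) := by
  rw [Derivation.leibniz, map_sub, derivative_one, derivative_X, h, smul_eq_mul, smul_eq_mul]
  linear_combination A * mk_one_mul_one_sub_eq_one R

theorem derivative_mk_eq_mul_of_recursion {K : Type*} [Field K] [CharZero K] {a A : ℕ → K}
    (hrec : ∀ N, 1 ≤ N → A N = 1 / (N : K) * ∑ n ∈ Icc 1 N, a n * A (N - n)) :
    d⁄dX K (mk A) = mk (fun n => a (n + 1)) * mk A := by
  ext N
  rw [coeff_derivative, coeff_mul, coeff_mk, hrec (N + 1) (by omega),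
    Nat.sum_Icc_sub_eq_sum_antidiagonal (fun n m => a n * A m)]
  simp only [coeff_mk]
  push_cast
  field_simp

variable {K : Type*} [Field K] [LinearOrder K] [IsStrictOrderedRing K]

theorem le_coeff_of_derivative_eq_mul {B b : K⟦X⟧} (hB : d⁄dX K B = b * B)
    (hb : ∀ n, 0 ≤ coeff n b) (hB₀ : 0 ≤ coeff 0 B) (N : ℕ) :
    coeff 0 B * coeff 0 b ^ N / N ! ≤ coeff N B := by
  induction N using Nat.strong_induction_on with
  | _ N ih =>
  rcases N with _ | n
  · simp
  have hB_nonneg : ∀ j ≤ n, 0 ≤ coeff j B := fun j hj =>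
    (div_nonneg (mul_nonneg hB₀ (pow_nonneg (hb 0) j)) (by positivity)).trans (ih j (by omega))
  have hcoeff : coeff (n + 1) B * (n + 1) = ∑ p ∈ antidiagonal n, coeff p.1 b * coeff p.2 B := by
    rw [← coeff_derivative, hB, coeff_mul]
  have hhead : coeff 0 b * coeff n B ≤ ∑ p ∈ antidiagonal n, coeff p.1 b * coeff p.2 B :=
    single_le_sum (a := (0, n)) (f := fun p : ℕ × ℕ => coeff p.1 b * coeff p.2 B)
      (fun p hp => mul_nonneg (hb _) (hB_nonneg _ (HasAntidiagonal.antidiagonal.snd_le hp)))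
      (mem_antidiagonal.2 (zero_add n))
  have hn : (0 : K) < n + 1 := by positivity
  calc coeff 0 B * coeff 0 b ^ (n + 1) / (n + 1)!
      = coeff 0 b * (coeff 0 B * coeff 0 b ^ n / n !) / (n + 1) := by
        push_cast [Nat.factorial_succ]; field_simp; ring
    _ ≤ coeff 0 b * coeff n B / (n + 1) := by gcongr; exacts [hb 0, ih n (by omega)]
    _ ≤ coeff (n + 1) B := by rw [div_le_iff₀ hn, hcoeff]; exact hhead

end PowerSeries

theorem Real.exp_le_liminf_of_sum_le {x : ℝ} {u : ℕ → ℝ}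
    (h : ∀ N, ∑ M ∈ range (N + 1), x ^ M / M ! ≤ u N) :
    (Real.exp x : EReal) ≤ liminf (fun N => (u N : EReal)) atTop := by
  have hsum : Tendsto (fun N => ∑ M ∈ range (N + 1), x ^ M / M !) atTop (nhds (Real.exp x)) := by
    rw [Real.exp_eq_exp_ℝ]
    exact (NormedSpace.expSeries_div_hasSum_exp x).tendsto_sum_nat.comp
      (tendsto_add_atTop_nat 1)
  rw [← ((continuous_coe_real_ereal.tendsto _).comp hsum).liminf_eq]
  exact liminf_le_liminf (.of_forall fun N => EReal.coe_le_coe_iff.2 (h N))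

/-- If `a n > 1` for `n ≥ 1` and `A 0 = 1`, `A N = (1/N) ∑_{n=1}^N a n * A (N-n)` for `N ≥ 1`,
then `A N - A (N-1) ≥ (a 1 - 1)^N / N!`, hence `A N ≥ ∑_{M=0}^N (a 1 - 1)^M / M!`,
so that `liminf A ≥ exp (a 1 - 1)`. -/
theorem recursion_lower_bounds (a : ℕ → ℝ) (ha : ∀ n, 1 ≤ n → 1 < a n)
    (A : ℕ → ℝ) (hA0 : A 0 = 1)
    (hrec : ∀ N, 1 ≤ N →
      A N = (1 / (N : ℝ)) * ∑ n ∈ Finset.Icc 1 N, a n * A (N - n)) :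
    (∀ N, 1 ≤ N → (a 1 - 1) ^ N / (Nat.factorial N : ℝ) ≤ A N - A (N - 1)) ∧
    (∀ N : ℕ, ∑ M ∈ Finset.range (N + 1), (a 1 - 1) ^ M / (Nat.factorial M : ℝ) ≤ A N) ∧
    (Real.exp (a 1 - 1) : EReal) ≤ Filter.liminf (fun N => (A N : EReal)) Filter.atTop := by
  set B : ℝ⟦X⟧ := (1 - X) * PowerSeries.mk A
  have hB : d⁄dX ℝ B = PowerSeries.mk (fun n => a (n + 1) - 1) * B := by
    rw [derivative_one_sub_X_mul (derivative_mk_eq_mul_of_recursion hrec)]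
    rfl
  have hB₀ : coeff 0 B = 1 := by simp [B, sub_mul, hA0]
  have hbound (N : ℕ) : (a 1 - 1) ^ N / N ! ≤ coeff N B := by
    simpa [hB₀] using le_coeff_of_derivative_eq_mul hB
      (fun n => by simpa using (ha (n + 1) (by omega)).le) (by rw [hB₀]; exact zero_le_one) N
  have hpartial (N : ℕ) : ∑ M ∈ range (N + 1), (a 1 - 1) ^ M / M ! ≤ A N := by
    calc ∑ M ∈ range (N + 1), (a 1 - 1) ^ M / M ! ≤ ∑ M ∈ range (N + 1), coeff M B :=
          sum_le_sum fun M _ => hbound M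
      _ = A N := by rw [sum_range_coeff_one_sub_X_mul, coeff_mk]
  refine ⟨fun N hN => ?_, hpartial, Real.exp_le_liminf_of_sum_le hpartial⟩
  obtain ⟨n, rfl⟩ := Nat.exists_eq_add_of_le' hN
  simpa [B, coeff_one_sub_X_mul_succ] using hbound (n + 1)
end

section
/- Let ι be a countable type and x : ι → ℝ with 0 ≤ x(i) < 1 for all i and ∑_i x(i) < ∞. For n ≥ 1 set q(n) = 1 + ∑_i x(i)^n (a convergent sum), and define A : ℕ → ℝ by A(0) = 1 and A(N) = (1/N) ∑_{n=1}^{N} q(n)·A(N−n) for N ≥ 1. Then for every N ≥ 0, the family indexed by finitely supported functions ν : ι → ℕ with ∑_i ν(i) ≤ N, with value ∏_{i ∈ supp ν} x(i)^{ν(i)}, is summable and A(N) = ∑_{ν : ∑ν ≤ N} ∏_{i ∈ supp ν} x(i)^{ν(i)}. -/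
open scoped ENNReal
open Finset Function

section
variable {ι : Type*}

lemma prod_toMultiset_map (y : ι → ℝ≥0∞) (ν : ι →₀ ℕ) :
    ((ν.toMultiset).map y).prod = ν.prod fun i k => y i ^ k := by
  induction ν using Finsupp.induction with
  | zero => simp
  | single_add i k ν hi hk ih =>
    rw [Finsupp.toMultiset_add, Multiset.map_add, Multiset.prod_add, ih,
      Finsupp.toMultiset_single, Multiset.map_nsmul, Multiset.map_singleton,
      Multiset.prod_nsmul, Multiset.prod_singleton,
      Finsupp.prod_add_index' (fun _ => pow_zero _) (fun _ _ _ => pow_add _ _ _)]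
    rw [Finsupp.prod_single_index (by exact pow_zero _)]

lemma tsum_pi_pow (y : ι → ℝ≥0∞) : ∀ M : ℕ,
    (∑' f : Fin M → ι, ∏ j, y (f j)) = (∑' i, y i) ^ M := by
  intro M
  induction M with
  | zero =>
    have h : (∑' f : Fin 0 → ι, ∏ j, y (f j)) = ∏ j : Fin 0, y ((fun j => Fin.elim0 j) j) :=
      tsum_eq_single _ (fun b hb => absurd (funext fun j => Fin.elim0 j) hb)
    simpa using h
  | succ M ih =>
    rw [← (Fin.consEquiv fun _ : Fin (M + 1) => ι).tsum_eq]
    simp only [Fin.consEquiv_apply, Fin.prod_univ_succ, Fin.cons_zero, Fin.cons_succ]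
    rw [ENNReal.tsum_prod']
    simp only [ENNReal.tsum_mul_left]
    rw [ENNReal.tsum_mul_right, ih, pow_succ]
    ring

noncomputable def Hsum (y : ι → ℝ≥0∞) (M : ℕ) : ℝ≥0∞ :=
  ∑' ν : {ν : ι →₀ ℕ // (ν.sum fun _ k => k) = M}, (ν : ι →₀ ℕ).prod fun i k => y i ^ k

lemma toMultiset_length {ν : ι →₀ ℕ} {M : ℕ} (h : (ν.sum fun _ k => k) = M) :
    (ν.toMultiset).toList.length = M := by
  rw [Multiset.length_toList, Finsupp.card_toMultiset]; exact h

noncomputable def toFn (M : ℕ) (ν : {ν : ι →₀ ℕ // (ν.sum fun _ k => k) = M}) : Fin M → ι :=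
  fun j => ((ν : ι →₀ ℕ).toMultiset).toList.get (Fin.cast (toMultiset_length ν.2).symm j)

lemma ofFn_get_cast (l : List ι) {M : ℕ} (h : l.length = M) :
    List.ofFn (fun j : Fin M => l.get (Fin.cast h.symm j)) = l := by
  subst h; simp [List.ofFn_get]

lemma toFn_injective (M : ℕ) : Injective (toFn (ι := ι) M) := by
  classical
  intro ν μ h
  have h2 : ((ν : ι →₀ ℕ).toMultiset).toList = ((μ : ι →₀ ℕ).toMultiset).toList := by
    rw [← ofFn_get_cast _ (toMultiset_length ν.2), ← ofFn_get_cast _ (toMultiset_length μ.2)]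
    exact congrArg List.ofFn h
  have h3 : (ν : ι →₀ ℕ).toMultiset = (μ : ι →₀ ℕ).toMultiset := by
    rw [← Multiset.coe_toList ((ν : ι →₀ ℕ).toMultiset), h2, Multiset.coe_toList]
  have h4 := congrArg Multiset.toFinsupp h3
  rwa [Finsupp.toMultiset_toFinsupp, Finsupp.toMultiset_toFinsupp, ← Subtype.ext_iff] at h4

lemma prod_toFn (y : ι → ℝ≥0∞) (M : ℕ) (ν : {ν : ι →₀ ℕ // (ν.sum fun _ k => k) = M}) :
    (∏ j, y (toFn M ν j)) = (ν : ι →₀ ℕ).prod fun i k => y i ^ k := by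
  rw [← prod_toMultiset_map y, ← Multiset.coe_toList ((ν : ι →₀ ℕ).toMultiset),
    Multiset.map_coe, Multiset.prod_coe]
  rw [← ofFn_get_cast ((ν : ι →₀ ℕ).toMultiset).toList (toMultiset_length ν.2),
    List.map_ofFn, List.prod_ofFn]
  rfl

lemma Hsum_ne_top {y : ι → ℝ≥0∞} (hy : (∑' i, y i) ≠ ⊤) (M : ℕ) : Hsum y M ≠ ⊤ := by
  have h1 : Hsum y M ≤ (∑' i, y i) ^ M := by
    rw [← tsum_pi_pow y M]
    calc Hsum y M = ∑' ν : {ν : ι →₀ ℕ // (ν.sum fun _ k => k) = M}, ∏ j, y (toFn M ν j) := by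
          unfold Hsum; exact tsum_congr fun ν => (prod_toFn y M ν).symm
    _ ≤ ∑' f : Fin M → ι, ∏ j, y (f j) :=
          ENNReal.tsum_comp_le_tsum_of_injective (toFn_injective M) _
  exact ne_top_of_le_ne_top (ENNReal.pow_ne_top hy) h1
end

section
variable {ι : Type*}
lemma sum_add_single (ν : ι →₀ ℕ) (i : ι) (n : ℕ) :
    ((ν + Finsupp.single i n).sum fun _ k => k) = (ν.sum fun _ k => k) + n := by
  rw [Finsupp.sum_add_index' (fun _ => rfl) (fun _ _ _ => rfl),
    Finsupp.sum_single_index rfl]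

lemma apply_le_sum (ν : ι →₀ ℕ) (i : ι) : ν i ≤ ν.sum fun _ k => k := by
  classical
  by_cases h : i ∈ ν.support
  · exact Finset.single_le_sum (fun _ _ => Nat.zero_le _) h
  · simp [Finsupp.notMem_support_iff.1 h]

lemma prod_add_single (y : ι → ℝ≥0∞) (ν : ι →₀ ℕ) (i : ι) (n : ℕ) :
    ((ν + Finsupp.single i n).prod fun i k => y i ^ k)
      = (ν.prod fun i k => y i ^ k) * y i ^ n := by
  rw [Finsupp.prod_add_index' (fun _ => pow_zero _) (fun _ _ _ => pow_add _ _ _)]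
  rw [Finsupp.prod_single_index (by exact pow_zero _)]

/-- flattened triple type -/
abbrev TT (ι : Type*) (M : ℕ) : Type _ :=
  {t : (ι →₀ ℕ) × ι × ℕ // (t.1.sum fun _ k => k) = M ∧ 1 ≤ t.2.2 ∧ t.2.2 ≤ t.1 t.2.1}

noncomputable def leftEquiv (ι : Type*) (M : ℕ) :
    (Σ n : (Finset.Icc 1 M : Finset ℕ),
        ι × {ν : ι →₀ ℕ // (ν.sum fun _ k => k) = M - (n : ℕ)}) ≃ TT ι M where
  toFun t := ⟨(t.2.2.1 + Finsupp.single t.2.1 t.1.1, t.2.1, t.1.1), by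
    obtain ⟨⟨n, hn⟩, i, ⟨ν', hν'⟩⟩ := t
    obtain ⟨hn1, hn2⟩ := Finset.mem_Icc.1 hn
    refine ⟨?_, hn1, ?_⟩
    · rw [sum_add_single, hν', Nat.sub_add_cancel hn2]
    · simp⟩
  invFun s := ⟨⟨s.1.2.2, by
      obtain ⟨⟨ν, i, n⟩, hs, h1, h2⟩ := s
      refine Finset.mem_Icc.2 ⟨h1, le_trans h2 ?_⟩
      rw [← hs]; exact apply_le_sum _ _⟩,
    s.1.2.1, ⟨s.1.1 - Finsupp.single s.1.2.1 s.1.2.2, by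
      obtain ⟨⟨ν, i, n⟩, hs, h1, h2⟩ := s
      have hle : Finsupp.single i n ≤ ν := Finsupp.single_le_iff.2 h2
      have h3 := sum_add_single (ν - Finsupp.single i n) i n
      rw [tsub_add_cancel_of_le hle, hs] at h3
      dsimp only at *
      omega⟩⟩
  left_inv t := by
    rcases t with ⟨⟨n, hn⟩, i, ⟨ν', hν'⟩⟩
    exact congrArg (Sigma.mk _) (Prod.ext rfl (Subtype.ext (add_tsub_cancel_right _ _)))
  right_inv s := by
    rcases s with ⟨⟨ν, i, n⟩, hs, h1, h2⟩
    exact Subtype.ext (Prod.ext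
      (tsub_add_cancel_of_le (Finsupp.single_le_iff.2 h2)) rfl)

noncomputable def rightEquiv (ι : Type*) (M : ℕ) [DecidableEq ι] :
    TT ι M ≃ (Σ ν : {ν : ι →₀ ℕ // (ν.sum fun _ k => k) = M},
      ((ν : ι →₀ ℕ).support.sigma fun i => Finset.Icc 1 ((ν : ι →₀ ℕ) i) :
        Finset (Σ _ : ι, ℕ))) where
  toFun t := ⟨⟨t.1.1, t.2.1⟩, ⟨⟨t.1.2.1, t.1.2.2⟩, by
    obtain ⟨⟨ν, i, n⟩, hs, h1, h2⟩ := t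
    refine Finset.mem_sigma.2 ⟨Finsupp.mem_support_iff.2 ?_, Finset.mem_Icc.2 ⟨h1, h2⟩⟩
    exact (Nat.lt_of_lt_of_le h1 h2).ne'⟩⟩
  invFun s := ⟨(s.1.1, s.2.1.1, s.2.1.2), by
    obtain ⟨⟨ν, hν⟩, ⟨⟨i, n⟩, hmem⟩⟩ := s
    have hm := Finset.mem_sigma.1 hmem
    exact ⟨hν, (Finset.mem_Icc.1 hm.2).1, (Finset.mem_Icc.1 hm.2).2⟩⟩
  left_inv t := rfl
  right_inv s := rfl
end

section
variable {ι : Type*}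

lemma ptimesH (y : ι → ℝ≥0∞) (n m : ℕ) :
    (∑' i, y i ^ n) * Hsum y m
      = ∑' p : ι × {ν : ι →₀ ℕ // (ν.sum fun _ k => k) = m},
          y p.1 ^ n * ((p.2 : ι →₀ ℕ).prod fun i k => y i ^ k) := by
  symm
  rw [ENNReal.tsum_prod']
  simp only [ENNReal.tsum_mul_left]
  rw [ENNReal.tsum_mul_right]
  rfl

lemma newton (y : ι → ℝ≥0∞) (M : ℕ) :
    ∑ n ∈ Finset.Icc 1 M, (∑' i, y i ^ n) * Hsum y (M - n)
      = (M : ℝ≥0∞) * Hsum y M := by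
  classical
  calc
    ∑ n ∈ Finset.Icc 1 M, (∑' i, y i ^ n) * Hsum y (M - n)
        = ∑' n : (Finset.Icc 1 M : Finset ℕ), (∑' i, y i ^ (n : ℕ)) * Hsum y (M - (n : ℕ)) :=
      (Finset.tsum_subtype _ _).symm
    _ = ∑' n : (Finset.Icc 1 M : Finset ℕ),
          ∑' p : ι × {ν : ι →₀ ℕ // (ν.sum fun _ k => k) = M - (n : ℕ)},
            y p.1 ^ (n : ℕ) * ((p.2 : ι →₀ ℕ).prod fun i k => y i ^ k) :=
      tsum_congr fun n => ptimesH y n (M - n)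
    _ = ∑' t : (Σ n : (Finset.Icc 1 M : Finset ℕ),
          ι × {ν : ι →₀ ℕ // (ν.sum fun _ k => k) = M - (n : ℕ)}),
            y t.2.1 ^ (t.1 : ℕ) * ((t.2.2 : ι →₀ ℕ).prod fun i k => y i ^ k) :=
      (ENNReal.tsum_sigma' (fun t : (Σ n : (Finset.Icc 1 M : Finset ℕ),
          ι × {ν : ι →₀ ℕ // (ν.sum fun _ k => k) = M - (n : ℕ)}) =>
        y t.2.1 ^ (t.1 : ℕ) * ((t.2.2 : ι →₀ ℕ).prod fun i k => y i ^ k))).symm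
    _ = ∑' s : TT ι M, (s.1.1.prod fun i k => y i ^ k) := by
      rw [← (leftEquiv ι M).tsum_eq]
      refine tsum_congr fun t => ?_
      rcases t with ⟨⟨n, hn⟩, i, ⟨ν', hν'⟩⟩
      show y i ^ n * (ν'.prod fun i k => y i ^ k)
          = (ν' + Finsupp.single i n).prod fun i k => y i ^ k
      rw [prod_add_single, mul_comm]
    _ = ∑' s' : (Σ ν : {ν : ι →₀ ℕ // (ν.sum fun _ k => k) = M},
          ((ν : ι →₀ ℕ).support.sigma fun i => Finset.Icc 1 ((ν : ι →₀ ℕ) i) :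
            Finset (Σ _ : ι, ℕ))),
          (s'.1 : ι →₀ ℕ).prod fun i k => y i ^ k :=
      (rightEquiv ι M).tsum_eq (fun s' => (s'.1 : ι →₀ ℕ).prod fun i k => y i ^ k)
    _ = ∑' ν : {ν : ι →₀ ℕ // (ν.sum fun _ k => k) = M},
          ∑' _p : (((ν : ι →₀ ℕ).support.sigma fun i => Finset.Icc 1 ((ν : ι →₀ ℕ) i) :
            Finset (Σ _ : ι, ℕ)) : Type _),
            ((ν : ι →₀ ℕ).prod fun i k => y i ^ k) :=
      ENNReal.tsum_sigma' (fun s' : (Σ ν : {ν : ι →₀ ℕ // (ν.sum fun _ k => k) = M},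
          ((ν : ι →₀ ℕ).support.sigma fun i => Finset.Icc 1 ((ν : ι →₀ ℕ) i) :
            Finset (Σ _ : ι, ℕ))) => (s'.1 : ι →₀ ℕ).prod fun i k => y i ^ k)
    _ = ∑' ν : {ν : ι →₀ ℕ // (ν.sum fun _ k => k) = M},
          (M : ℝ≥0∞) * ((ν : ι →₀ ℕ).prod fun i k => y i ^ k) := by
      refine tsum_congr fun ν => ?_
      rw [Finset.tsum_subtype _ (fun _ => ((ν : ι →₀ ℕ).prod fun i k => y i ^ k)),
        Finset.sum_const, nsmul_eq_mul]
      congr 1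
      rw [Finset.card_sigma]
      simp only [Nat.card_Icc, Nat.add_sub_cancel]
      exact_mod_cast congrArg (Nat.cast (R := ℝ≥0∞)) ν.2
    _ = (M : ℝ≥0∞) * Hsum y M := ENNReal.tsum_mul_left
end

section
variable {ι : Type*}

noncomputable def cutEquiv (ι : Type*) (N : ℕ) :
    {ν : ι →₀ ℕ // (ν.sum fun _ k => k) ≤ N} ≃
    (Σ M : (Finset.range (N + 1) : Finset ℕ),
      {ν : ι →₀ ℕ // (ν.sum fun _ k => k) = (M : ℕ)}) where
  toFun ν := ⟨⟨ν.1.sum fun _ k => k, Finset.mem_range_succ_iff.2 ν.2⟩, ⟨ν.1, rfl⟩⟩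
  invFun s := ⟨s.2.1, by rw [s.2.2]; exact Finset.mem_range_succ_iff.1 s.1.2⟩
  left_inv ν := rfl
  right_inv s := by
    rcases s with ⟨⟨M, hM⟩, ⟨ν, hν⟩⟩
    dsimp only at hν
    subst hν
    rfl

lemma HsumLe_eq (y : ι → ℝ≥0∞) (N : ℕ) :
    (∑' ν : {ν : ι →₀ ℕ // (ν.sum fun _ k => k) ≤ N},
      (ν : ι →₀ ℕ).prod fun i k => y i ^ k)
    = ∑ M ∈ Finset.range (N + 1), Hsum y M := by
  calc (∑' ν : {ν : ι →₀ ℕ // (ν.sum fun _ k => k) ≤ N},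
        (ν : ι →₀ ℕ).prod fun i k => y i ^ k)
      = ∑' s : (Σ M : (Finset.range (N + 1) : Finset ℕ),
          {ν : ι →₀ ℕ // (ν.sum fun _ k => k) = (M : ℕ)}),
          ((s.2 : ι →₀ ℕ).prod fun i k => y i ^ k) :=
      (cutEquiv ι N).tsum_eq (fun s : (Σ M : (Finset.range (N + 1) : Finset ℕ),
        {ν : ι →₀ ℕ // (ν.sum fun _ k => k) = (M : ℕ)}) =>
          (s.2 : ι →₀ ℕ).prod fun i k => y i ^ k)
    _ = ∑' M : (Finset.range (N + 1) : Finset ℕ), Hsum y (M : ℕ) :=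
      ENNReal.tsum_sigma' (fun s : (Σ M : (Finset.range (N + 1) : Finset ℕ),
        {ν : ι →₀ ℕ // (ν.sum fun _ k => k) = (M : ℕ)}) =>
          (s.2 : ι →₀ ℕ).prod fun i k => y i ^ k)
    _ = ∑ M ∈ Finset.range (N + 1), Hsum y M := Finset.tsum_subtype _ _

lemma Hsum_zero (y : ι → ℝ≥0∞) : Hsum y 0 = 1 := by
  unfold Hsum
  rw [tsum_eq_single (⟨0, by simp⟩ : {ν : ι →₀ ℕ // (ν.sum fun _ k => k) = 0})]
  · simp
  · intro b hb
    exfalso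
    apply hb
    apply Subtype.ext
    apply Finsupp.ext fun i => ?_
    have := apply_le_sum (b : ι →₀ ℕ) i
    rw [b.2] at this
    simpa using this

lemma key_recursion (h p : ℕ → ℝ)
    (hnewton : ∀ L, ∑ n ∈ Finset.Icc 1 L, p n * h (L - n) = L * h L)
    (N : ℕ) :
    ∑ n ∈ Finset.Icc 1 N, (1 + p n) * (∑ M ∈ Finset.range (N - n + 1), h M)
      = N * ∑ M ∈ Finset.range (N + 1), h M := by
  have hsplit : ∀ n ∈ Finset.Icc 1 N, (1 + p n) * (∑ M ∈ Finset.range (N - n + 1), h M)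
      = (∑ M ∈ Finset.range (N - n + 1), h M)
        + p n * (∑ M ∈ Finset.range (N - n + 1), h M) := fun n _ => by ring
  rw [Finset.sum_congr rfl hsplit, Finset.sum_add_distrib]
  have e1 : ∀ n ∈ Finset.Icc 1 N, ∑ M ∈ Finset.range (N - n + 1), h M
      = ∑ M ∈ Finset.range (N + 1), if M ≤ N - n then h M else 0 := by
    intro n hn
    rw [← Finset.sum_filter]
    apply Finset.sum_congr _ (fun _ _ => rfl)
    ext M
    simp only [Finset.mem_range, Finset.mem_filter]
    omega
  have part1 : ∑ n ∈ Finset.Icc 1 N, ∑ M ∈ Finset.range (N - n + 1), h M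
      = ∑ M ∈ Finset.range (N + 1), ((N - M : ℕ) : ℝ) * h M := by
    rw [Finset.sum_congr rfl e1, Finset.sum_comm]
    refine Finset.sum_congr rfl fun M hM => ?_
    rw [Finset.sum_ite, Finset.sum_const, Finset.sum_const_zero, add_zero, nsmul_eq_mul]
    congr 1
    have hM' : M ≤ N := Finset.mem_range_succ_iff.1 hM
    have : Finset.filter (fun n => M ≤ N - n) (Finset.Icc 1 N) = Finset.Icc 1 (N - M) := by
      ext n
      simp only [Finset.mem_filter, Finset.mem_Icc]
      omega
    rw [this, Nat.card_Icc]
    norm_cast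
  have part2 : ∑ n ∈ Finset.Icc 1 N, p n * (∑ M ∈ Finset.range (N - n + 1), h M)
      = ∑ L ∈ Finset.Icc 1 N, (L : ℝ) * h L := by
    have e2 : ∀ n ∈ Finset.Icc 1 N, p n * (∑ M ∈ Finset.range (N - n + 1), h M)
        = ∑ M ∈ Finset.range (N - n + 1), p n * h M := fun n _ => Finset.mul_sum _ _ _
    rw [Finset.sum_congr rfl e2, Finset.sum_sigma']
    rw [show (∑ L ∈ Finset.Icc 1 N, (L : ℝ) * h L)
        = ∑ L ∈ Finset.Icc 1 N, ∑ n ∈ Finset.Icc 1 L, p n * h (L - n) from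
      Finset.sum_congr rfl fun L _ => (hnewton L).symm, Finset.sum_sigma']
    refine Finset.sum_nbij' (fun a => ⟨a.1 + a.2, a.1⟩) (fun b => ⟨b.2, b.1 - b.2⟩)
      ?_ ?_ ?_ ?_ ?_
    · intro a ha
      simp only [Finset.mem_sigma, Finset.mem_Icc, Finset.mem_range] at ha ⊢
      omega
    · intro b hb
      simp only [Finset.mem_sigma, Finset.mem_Icc, Finset.mem_range] at hb ⊢
      omega
    · intro a ha
      rcases a with ⟨a1, a2⟩
      simp only [Finset.mem_sigma, Finset.mem_Icc, Finset.mem_range] at ha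
      show (⟨a1, a1 + a2 - a1⟩ : (_ : ℕ) × ℕ) = ⟨a1, a2⟩
      exact congrArg (Sigma.mk a1) (by omega)
    · intro b hb
      rcases b with ⟨b1, b2⟩
      simp only [Finset.mem_sigma, Finset.mem_Icc, Finset.mem_range] at hb
      show (⟨b2 + (b1 - b2), b2⟩ : (_ : ℕ) × ℕ) = ⟨b1, b2⟩
      exact congrArg (fun t => (⟨t, b2⟩ : (_ : ℕ) × ℕ)) (by omega)
    · intro a ha
      rcases a with ⟨a1, a2⟩
      simp only [Nat.add_sub_cancel_left]
  rw [part1, part2]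
  have hsub : Finset.Icc 1 N ⊆ Finset.range (N + 1) := by
    intro L hL
    simp only [Finset.mem_Icc] at hL
    exact Finset.mem_range_succ_iff.2 hL.2
  rw [Finset.sum_subset hsub (fun L hLmem hL => by
    have hL0 : L = 0 := by
      simp only [Finset.mem_Icc, not_and, not_le] at hL
      simp only [Finset.mem_range] at hLmem
      omega
    simp [hL0])]
  rw [← Finset.sum_add_distrib, Finset.mul_sum]
  refine Finset.sum_congr rfl fun M hM => ?_
  have hM' : M ≤ N := Finset.mem_range_succ_iff.1 hM
  rw [← add_mul]
  congr 1
  push_cast [Nat.cast_sub hM']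
  ring
end

/-- Equivalence of the cycle representation and the occupation-number representation of
the canonical partition function of the ideal Bose gas: with `q n = 1 + ∑_i x i ^ n`
and `A` defined by the cycle recursion, `A N` equals the sum over all finitely supported
occupation numbers `ν : ι →₀ ℕ` with `∑ ν ≤ N` of `∏_{i ∈ supp ν} x i ^ ν i`. -/
theorem cycle_occupation_equivalence {ι : Type*} [Countable ι] (x : ι → ℝ)
    (hx0 : ∀ i, 0 ≤ x i) (hx1 : ∀ i, x i < 1) (hsum : Summable x)
    (q : ℕ → ℝ) (hq : ∀ n, 1 ≤ n → q n = 1 + ∑' i, x i ^ n)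
    (A : ℕ → ℝ) (hA0 : A 0 = 1)
    (hrec : ∀ N, 1 ≤ N →
      A N = (1 / (N : ℝ)) * ∑ n ∈ Finset.Icc 1 N, q n * A (N - n)) :
    ∀ N : ℕ,
      Summable (fun ν : {ν : ι →₀ ℕ // (ν.sum fun _ k => k) ≤ N} =>
        (ν : ι →₀ ℕ).prod fun i k => x i ^ k) ∧
      A N = ∑' ν : {ν : ι →₀ ℕ // (ν.sum fun _ k => k) ≤ N},
        (ν : ι →₀ ℕ).prod fun i k => x i ^ k := by
  classical
  set y : ι → ℝ≥0∞ := fun i => ENNReal.ofReal (x i) with hy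
  set h : ℕ → ℝ := fun M => (Hsum y M).toReal with hh
  set p : ℕ → ℝ := fun n => ∑' i, x i ^ n with hp
  have hyt : (∑' i, y i) ≠ ⊤ := by
    rw [hy, ← ENNReal.ofReal_tsum_of_nonneg hx0 hsum]; exact ENNReal.ofReal_ne_top
  have hHt : ∀ M, Hsum y M ≠ ⊤ := Hsum_ne_top hyt
  have hyne : ∀ (i : ι) (k : ℕ), y i ^ k ≠ ⊤ := fun i k =>
    ENNReal.pow_ne_top (by rw [hy]; exact ENNReal.ofReal_ne_top)
  have hy1 : ∀ i, y i ≤ 1 := fun i => by rw [hy]; exact ENNReal.ofReal_le_one.2 (hx1 i).le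
  have hPt : ∀ n, 1 ≤ n → (∑' i, y i ^ n) ≠ ⊤ := fun n hn =>
    ne_top_of_le_ne_top hyt (ENNReal.tsum_le_tsum fun i =>
      pow_le_of_le_one (zero_le) (hy1 i) (by omega))
  have hptoReal : ∀ n : ℕ, (∑' i, y i ^ n).toReal = p n := fun n => by
    rw [ENNReal.tsum_toReal_eq (fun i => hyne i n), hp]
    exact tsum_congr fun i => by
      rw [hy, ← ENNReal.ofReal_pow (hx0 i), ENNReal.toReal_ofReal (pow_nonneg (hx0 i) n)]
  have hnewton : ∀ L : ℕ, ∑ n ∈ Finset.Icc 1 L, p n * h (L - n) = L * h L := by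
    intro L
    have h1 := congrArg ENNReal.toReal (newton y L)
    rw [ENNReal.toReal_mul, ENNReal.toReal_natCast,
      ENNReal.toReal_sum
        (fun n hn => ENNReal.mul_ne_top (hPt n (Finset.mem_Icc.1 hn).1) (hHt _))] at h1
    rw [hh]
    rw [← h1]
    exact Finset.sum_congr rfl fun n _ => by rw [ENNReal.toReal_mul, hptoReal]
  -- A N equals the cumulative sum
  have hAc : ∀ N : ℕ, A N = ∑ M ∈ Finset.range (N + 1), h M := by
    intro N
    induction N using Nat.strong_induction_on with
    | _ N ih =>
      match N with
      | 0 =>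
        rw [hA0, Finset.sum_range_one, hh]
        simp [Hsum_zero]
      | (K + 1) =>
        rw [hrec (K + 1) (Nat.succ_le_succ (Nat.zero_le K))]
        have e : ∀ n ∈ Finset.Icc 1 (K + 1), q n * A (K + 1 - n)
            = (1 + p n) * (∑ M ∈ Finset.range (K + 1 - n + 1), h M) := by
          intro n hn
          obtain ⟨hn1, hn2⟩ := Finset.mem_Icc.1 hn
          rw [hq n hn1, ih (K + 1 - n) (by omega), hp]
        rw [Finset.sum_congr rfl e, key_recursion h p hnewton (K + 1)]
        rw [← mul_assoc, one_div_mul_cancel (by exact_mod_cast Nat.succ_ne_zero K), one_mul]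
  intro N
  have hne : ∀ ν : {ν : ι →₀ ℕ // (ν.sum fun _ k => k) ≤ N},
      ((ν : ι →₀ ℕ).prod fun i k => y i ^ k) ≠ ⊤ := fun ν =>
    ENNReal.prod_ne_top (fun i _ => hyne i _)
  have htop : (∑' ν : {ν : ι →₀ ℕ // (ν.sum fun _ k => k) ≤ N},
      (ν : ι →₀ ℕ).prod fun i k => y i ^ k) ≠ ⊤ := by
    rw [HsumLe_eq]
    exact (ENNReal.sum_lt_top.2 fun M _ => (hHt M).lt_top).ne
  have hterm : ∀ ν : {ν : ι →₀ ℕ // (ν.sum fun _ k => k) ≤ N},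
      ((ν : ι →₀ ℕ).prod fun i k => y i ^ k).toReal
        = (ν : ι →₀ ℕ).prod fun i k => x i ^ k := by
    intro ν
    rw [Finsupp.prod, Finsupp.prod, ENNReal.toReal_prod]
    exact Finset.prod_congr rfl fun i _ => by
      rw [hy, ← ENNReal.ofReal_pow (hx0 i), ENNReal.toReal_ofReal (pow_nonneg (hx0 i) _)]
  refine ⟨(summable_congr hterm).mp (ENNReal.summable_toReal htop), ?_⟩
  calc A N = ∑ M ∈ Finset.range (N + 1), h M := hAc N
    _ = (∑ M ∈ Finset.range (N + 1), Hsum y M).toReal :=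
      (ENNReal.toReal_sum fun M _ => hHt M).symm
    _ = (∑' ν : {ν : ι →₀ ℕ // (ν.sum fun _ k => k) ≤ N},
        (ν : ι →₀ ℕ).prod fun i k => y i ^ k).toReal := by rw [HsumLe_eq]
    _ = ∑' ν : {ν : ι →₀ ℕ // (ν.sum fun _ k => k) ≤ N},
        ((ν : ι →₀ ℕ).prod fun i k => y i ^ k).toReal :=
      ENNReal.tsum_toReal_eq fun ν => hne ν
    _ = ∑' ν : {ν : ι →₀ ℕ // (ν.sum fun _ k => k) ≤ N},
        (ν : ι →₀ ℕ).prod fun i k => x i ^ k := tsum_congr hterm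
end

section
/- Let ι be a countable type and x : ι → ℝ with 0 ≤ x(i) < 1 for all i and ∑_i x(i) < ∞. For n ≥ 1 set q(n) = 1 + ∑_i x(i)^n, and define A : ℕ → ℝ by A(0) = 1 and A(N) = (1/N) ∑_{n=1}^{N} q(n)·A(N−n) for N ≥ 1. Then A(N) converges as N → ∞, the series ∑_{n=1}^{∞} (q(n) − 1)/n converges, the infinite product ∏_i (1 − x(i))^{-1} converges, and lim_{N→∞} A(N) = ∏_i (1 − x(i))^{-1} = exp(∑_{n=1}^{∞} (q(n) − 1)/n). -/
set_option maxHeartbeats 1000000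

open Finset Filter

namespace IdealGasAux
variable {ι : Type*}

noncomputable def bw (x : ι → ℝ) (f : ι →₀ ℕ) : ℝ := f.prod fun i n => x i ^ n

lemma bw_nonneg {x : ι → ℝ} (hx0 : ∀ i, 0 ≤ x i) (f : ι →₀ ℕ) : 0 ≤ bw x f :=
  Finset.prod_nonneg fun i _ => pow_nonneg (hx0 i) _

lemma bw_zero (x : ι → ℝ) : bw x 0 = 1 := Finsupp.prod_zero_index

lemma bw_add (x : ι → ℝ) (f g : ι →₀ ℕ) : bw x (f + g) = bw x f * bw x g :=
  Finsupp.prod_add_index' (fun _ => pow_zero _) (fun _ a b => pow_add _ a b)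

lemma bw_single (x : ι → ℝ) (i : ι) (n : ℕ) : bw x (Finsupp.single i n) = x i ^ n :=
  Finsupp.prod_single_index (pow_zero _)

def deg (f : ι →₀ ℕ) : ℕ := f.sum fun _ n => n

lemma deg_add (f g : ι →₀ ℕ) : deg (f + g) = deg f + deg g :=
  Finsupp.sum_add_index' (fun _ => rfl) (fun _ _ _ => rfl)

lemma deg_single (i : ι) (n : ℕ) : deg (Finsupp.single i n) = n :=
  Finsupp.sum_single_index rfl

lemma apply_le_deg (f : ι →₀ ℕ) (i : ι) : f i ≤ deg f := by
  by_cases hi : i ∈ f.support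
  · exact Finset.single_le_sum (f := fun j => f j) (fun j _ => Nat.zero_le _) hi
  · simp [Finsupp.notMem_support_iff.1 hi]

lemma deg_eq_zero {f : ι →₀ ℕ} (h : deg f = 0) : f = 0 := by
  ext i
  have h2 := apply_le_deg f i
  rw [h] at h2
  simpa using h2

noncomputable def suppEquiv [DecidableEq ι] (a : ι) (s : Finset ι) (ha : a ∉ s) :
    {f : ι →₀ ℕ // f.support ⊆ insert a s} ≃ ℕ × {f : ι →₀ ℕ // f.support ⊆ s} where
  toFun f := (f.1 a, ⟨f.1.erase a, by
    classical
    intro i hi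
    rw [Finsupp.support_erase, Finset.mem_erase] at hi
    rcases Finset.mem_insert.1 (f.2 hi.2) with h | h
    · exact absurd h hi.1
    · exact h⟩)
  invFun p := ⟨p.2.1 + Finsupp.single a p.1, by
    classical
    intro i hi
    rcases Finset.mem_union.1 (Finsupp.support_add hi) with h | h
    · exact Finset.mem_insert_of_mem (p.2.2 h)
    · exact Finset.mem_insert.2 (Or.inl (Finset.mem_singleton.1
        (Finsupp.support_single_subset h)))⟩
  left_inv f := Subtype.ext (Finsupp.erase_add_single a f.1)
  right_inv p := by
    have hpa : p.2.1 a = 0 := Finsupp.notMem_support_iff.1 (fun h => ha (p.2.2 h))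
    refine Prod.ext ?_ (Subtype.ext ?_)
    · simp [Finsupp.add_apply, hpa]
    · simp only [Finsupp.erase_add, Finsupp.erase_single, add_zero]
      exact Finsupp.erase_of_notMem_support (fun h => ha (p.2.2 h))

lemma suppEquiv_symm_apply [DecidableEq ι] (a : ι) (s : Finset ι) (ha : a ∉ s)
    (p : ℕ × {f : ι →₀ ℕ // f.support ⊆ s}) :
    ((suppEquiv a s ha).symm p).1 = p.2.1 + Finsupp.single a p.1 := rfl

lemma hasSum_bw_subtype {x : ι → ℝ} (hx0 : ∀ i, 0 ≤ x i) (hx1 : ∀ i, x i < 1) (s : Finset ι) :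
    HasSum (fun f : {f : ι →₀ ℕ // f.support ⊆ s} => bw x f.1) (∏ i ∈ s, (1 - x i)⁻¹) := by
  classical
  induction s using Finset.induction_on with
  | empty =>
      have huniq : ∀ f : {f : ι →₀ ℕ // f.support ⊆ (∅ : Finset ι)},
          f = ⟨0, by simp⟩ := by
        rintro ⟨f, hf⟩
        exact Subtype.ext (Finsupp.support_eq_empty.1 (Finset.subset_empty.1 hf))
      have hs := hasSum_single (f := fun f : {f : ι →₀ ℕ // f.support ⊆ (∅ : Finset ι)} => bw x f.1)
        ⟨0, by simp⟩ (fun f' hne => absurd (huniq f') hne)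
      simpa [bw_zero] using hs
  | @insert a s ha ih =>
      have hgeo : HasSum (fun n : ℕ => x a ^ n) (1 - x a)⁻¹ :=
        hasSum_geometric_of_lt_one (hx0 a) (hx1 a)
      have hmul : HasSum (fun p : ℕ × {f : ι →₀ ℕ // f.support ⊆ s} => x a ^ p.1 * bw x p.2.1)
          ((1 - x a)⁻¹ * ∏ i ∈ s, (1 - x i)⁻¹) :=
        HasSum.mul (f := fun n : ℕ => x a ^ n)
          (g := fun f : {f : ι →₀ ℕ // f.support ⊆ s} => bw x f.1) hgeo ih
          (hgeo.summable.mul_of_nonneg ih.summable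
            (fun n => pow_nonneg (hx0 a) n) (fun p => bw_nonneg hx0 p.1))
      have hfun : ((fun f : {f : ι →₀ ℕ // f.support ⊆ insert a s} => bw x f.1)
            ∘ ⇑(suppEquiv a s ha).symm)
          = fun p : ℕ × {f : ι →₀ ℕ // f.support ⊆ s} => x a ^ p.1 * bw x p.2.1 := by
        funext p
        show bw x ((suppEquiv a s ha).symm p).1 = x a ^ p.1 * bw x p.2.1
        rw [suppEquiv_symm_apply, bw_add, bw_single, mul_comm]
      rw [Finset.prod_insert ha]
      exact ((suppEquiv a s ha).symm.hasSum_iff).1 (hfun ▸ hmul)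

lemma newton (x : ι → ℝ) (hx0 : ∀ i, 0 ≤ x i)
    (hxn : ∀ n : ℕ, 1 ≤ n → Summable fun i => x i ^ n)
    (hbw : Summable (bw x)) (N : ℕ) :
    (N : ℝ) * (∑' f : {f : ι →₀ ℕ // deg f = N}, bw x f.1)
      = ∑ n ∈ Finset.Icc 1 N, (∑' i, x i ^ n) *
          (∑' f : {f : ι →₀ ℕ // deg f = N - n}, bw x f.1) := by
  classical
  have hfib : ∀ k : ℕ, HasSum (fun f : {f : ι →₀ ℕ // deg f = k} => bw x f.1)
      (∑' f : {f : ι →₀ ℕ // deg f = k}, bw x f.1) := fun k =>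
    (hbw.subtype {f | deg f = k}).hasSum
  have key : ∀ n, 1 ≤ n → n ≤ N →
      HasSum (fun w : {f : ι →₀ ℕ // deg f = N} × ι =>
          if n ≤ w.1.1 w.2 then bw x w.1.1 else 0)
        ((∑' i, x i ^ n) * ∑' f : {f : ι →₀ ℕ // deg f = N - n}, bw x f.1) := by
    intro n h1 h2
    have hxs := hxn n h1
    have hmul : HasSum (fun w : ι × {f : ι →₀ ℕ // deg f = N - n} => x w.1 ^ n * bw x w.2.1)
        ((∑' i, x i ^ n) * ∑' f : {f : ι →₀ ℕ // deg f = N - n}, bw x f.1) :=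
      HasSum.mul (f := fun i : ι => x i ^ n)
        (g := fun f : {f : ι →₀ ℕ // deg f = N - n} => bw x f.1)
        hxs.hasSum (hfib (N - n))
        (hxs.mul_of_nonneg (hfib (N - n)).summable
          (fun i => pow_nonneg (hx0 i) n) (fun f => bw_nonneg hx0 f.1))
    set Φ : ι × {f : ι →₀ ℕ // deg f = N - n} → {f : ι →₀ ℕ // deg f = N} × ι := fun w =>
      (⟨w.2.1 + Finsupp.single w.1 n, by
        rw [deg_add, deg_single, w.2.2]; omega⟩, w.1) with hΦ
    have hinj : Function.Injective Φ := by
      rintro ⟨i, f⟩ ⟨j, g⟩ heq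
      simp only [hΦ, Prod.mk.injEq, Subtype.mk.injEq] at heq
      obtain ⟨h1', h2'⟩ := heq
      subst h2'
      exact Prod.ext rfl (Subtype.ext (add_right_cancel h1'))
    have hran : ∀ w, w ∉ Set.range Φ →
        (if n ≤ w.1.1 w.2 then bw x w.1.1 else 0) = 0 := by
      rintro ⟨⟨g, hg⟩, i⟩ hw
      by_cases hni : n ≤ g i
      · exfalso
        apply hw
        have hle : Finsupp.single i n ≤ g := Finsupp.single_le_iff.2 hni
        have heq : g - Finsupp.single i n + Finsupp.single i n = g :=
          tsub_add_cancel_of_le hle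
        have hdeg : deg (g - Finsupp.single i n) = N - n := by
          have := congrArg deg heq
          rw [deg_add, deg_single] at this
          omega
        exact ⟨(i, ⟨g - Finsupp.single i n, hdeg⟩), by
          simp only [hΦ, Prod.mk.injEq, Subtype.mk.injEq]
          exact ⟨heq, trivial⟩⟩
      · simp [hni]
    have hcomp : (fun w : {f : ι →₀ ℕ // deg f = N} × ι =>
          if n ≤ w.1.1 w.2 then bw x w.1.1 else 0) ∘ Φ
        = fun w : ι × {f : ι →₀ ℕ // deg f = N - n} => x w.1 ^ n * bw x w.2.1 := by
      funext w
      have happ : (w.2.1 + Finsupp.single w.1 n) w.1 = w.2.1 w.1 + n := by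
        simp [Finsupp.add_apply]
      simp only [Function.comp_apply, hΦ]
      rw [if_pos (by omega : n ≤ (w.2.1 + Finsupp.single w.1 n) w.1)]
      rw [bw_add, bw_single, mul_comm]
    exact (hinj.hasSum_iff hran).1 (hcomp ▸ hmul)
  have hsumN : HasSum (fun w : {f : ι →₀ ℕ // deg f = N} × ι =>
      ∑ n ∈ Finset.Icc 1 N, if n ≤ w.1.1 w.2 then bw x w.1.1 else 0)
      (∑ n ∈ Finset.Icc 1 N, (∑' i, x i ^ n) *
        ∑' f : {f : ι →₀ ℕ // deg f = N - n}, bw x f.1) :=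
    hasSum_sum fun n hn => key n (Finset.mem_Icc.1 hn).1 (Finset.mem_Icc.1 hn).2
  have hpt : (fun w : {f : ι →₀ ℕ // deg f = N} × ι =>
      ∑ n ∈ Finset.Icc 1 N, if n ≤ w.1.1 w.2 then bw x w.1.1 else 0)
      = fun w => (w.1.1 w.2 : ℝ) * bw x w.1.1 := by
    funext w
    obtain ⟨⟨g, hg⟩, i⟩ := w
    have hgi : g i ≤ N := hg ▸ apply_le_deg g i
    rw [← Finset.sum_filter]
    have hfil : (Finset.Icc 1 N).filter (fun n => n ≤ g i) = Finset.Icc 1 (g i) := by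
      ext m
      simp only [Finset.mem_filter, Finset.mem_Icc]
      omega
    rw [hfil, Finset.sum_const, Nat.card_Icc, nsmul_eq_mul]
    norm_num
  rw [hpt] at hsumN
  have hslice : ∀ g : {f : ι →₀ ℕ // deg f = N},
      HasSum (fun i : ι => ((g.1 i : ℝ)) * bw x g.1) ((N : ℝ) * bw x g.1) := by
    intro g
    have h1 : HasSum (fun i : ι => (g.1 i : ℝ)) (N : ℝ) := by
      have h2 := hasSum_sum_of_ne_finset_zero (s := g.1.support) (L := SummationFilter.unconditional ι)
        (f := fun i : ι => (g.1 i : ℝ))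
        (fun i hi => by simp [Finsupp.notMem_support_iff.1 hi])
      have h3 : ∑ i ∈ g.1.support, (g.1 i : ℝ) = (N : ℝ) := by
        rw [← Nat.cast_sum]
        exact_mod_cast congrArg (Nat.cast (R := ℝ)) g.2
      rwa [h3] at h2
    exact h1.mul_right _
  have hN1 : HasSum (fun g : {f : ι →₀ ℕ // deg f = N} => (N : ℝ) * bw x g.1)
      (∑ n ∈ Finset.Icc 1 N, (∑' i, x i ^ n) *
        ∑' f : {f : ι →₀ ℕ // deg f = N - n}, bw x f.1) :=
    HasSum.prod_fiberwise hsumN hslice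
  have hN2 : HasSum (fun g : {f : ι →₀ ℕ // deg f = N} => (N : ℝ) * bw x g.1)
      ((N : ℝ) * ∑' f : {f : ι →₀ ℕ // deg f = N}, bw x f.1) := (hfib N).mul_left _
  exact hN2.unique hN1

end IdealGasAux

open IdealGasAux in
/-- Fixed-volume `N → ∞` limit of the ideal-Bose-gas canonical partition function:
with `q n = 1 + ∑_i x i ^ n` and `A` the cycle recursion, `A N` converges to
`∏_i (1 - x i)⁻¹ = exp (∑_{n≥1} (q n - 1)/n)`. -/
theorem ideal_gas_fixed_volume_limit {ι : Type*} [Countable ι] (x : ι → ℝ)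
    (hx0 : ∀ i, 0 ≤ x i) (hx1 : ∀ i, x i < 1) (hsum : Summable x)
    (q : ℕ → ℝ) (hq : ∀ n, 1 ≤ n → q n = 1 + ∑' i, x i ^ n)
    (A : ℕ → ℝ) (hA0 : A 0 = 1)
    (hrec : ∀ N, 1 ≤ N →
      A N = (1 / (N : ℝ)) * ∑ n ∈ Finset.Icc 1 N, q n * A (N - n)) :
    Multipliable (fun i => (1 - x i)⁻¹) ∧
    Summable (fun n : ℕ => (q (n + 1) - 1) / ((n : ℝ) + 1)) ∧
    Filter.Tendsto A Filter.atTop (nhds (∏' i, (1 - x i)⁻¹)) ∧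
    ∏' i, (1 - x i)⁻¹ = Real.exp (∑' n : ℕ, (q (n + 1) - 1) / ((n : ℝ) + 1)) := by
  classical
  have h1x : ∀ i, 0 < 1 - x i := fun i => by linarith [hx1 i]
  -- a uniform geometric bound
  obtain ⟨r, hr0, hr1, hrle⟩ : ∃ r : ℝ, 0 ≤ r ∧ r < 1 ∧ ∀ i, x i ≤ r := by
    have hev : ∀ᶠ i in Filter.cofinite, x i < 1/2 :=
      hsum.tendsto_cofinite_zero.eventually_lt_const (by norm_num)
    have hfin : {i | ¬ x i < 1/2}.Finite := Filter.eventually_cofinite.1 hev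
    set t := hfin.toFinset with ht
    set r' : NNReal := t.sup (fun i => ⟨x i, hx0 i⟩) with hr'
    refine ⟨max (1/2) (r' : ℝ), le_max_of_le_left (by norm_num), ?_, ?_⟩
    · apply max_lt (by norm_num)
      have hlt : r' < 1 := by
        refine (Finset.sup_lt_iff (by norm_num : (⊥ : NNReal) < 1)).2 ?_
        intro i _
        exact_mod_cast hx1 i
      exact_mod_cast hlt
    · intro i
      by_cases hi : i ∈ t
      · have h1 : (⟨x i, hx0 i⟩ : NNReal) ≤ r' :=
          Finset.le_sup (f := fun i => (⟨x i, hx0 i⟩ : NNReal)) hi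
        exact le_max_of_le_right (NNReal.coe_le_coe.2 h1)
      · have h2 : x i < 1/2 := by
          by_contra hcon
          exact hi (hfin.mem_toFinset.2 (by simpa using hcon))
        exact le_max_of_le_left h2.le
  have hpow : ∀ n : ℕ, 1 ≤ n → Summable fun i => x i ^ n := fun n hn =>
    Summable.of_nonneg_of_le (fun i => pow_nonneg (hx0 i) n)
      (fun i => by
        calc x i ^ n ≤ x i ^ 1 := pow_le_pow_of_le_one (hx0 i) (hx1 i).le hn
          _ = x i := pow_one _) hsum
  -- log summability and the infinite product
  have hlog : Summable fun i => -Real.log (1 - x i) := by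
    have hb : Summable fun i => x i * (1 - r)⁻¹ := hsum.mul_right _
    refine Summable.of_nonneg_of_le (fun i => ?_) (fun i => ?_) hb
    · rw [neg_nonneg]
      exact Real.log_nonpos (by linarith [hx1 i]) (by linarith [hx0 i])
    · rw [← Real.log_inv]
      have h2 := Real.log_le_sub_one_of_pos (inv_pos.2 (h1x i))
      have h3 : (1 - x i)⁻¹ - 1 = x i * (1 - x i)⁻¹ := by
        field_simp [(h1x i).ne']
        ring
      have h4 : (1 - x i)⁻¹ ≤ (1 - r)⁻¹ := by
        apply inv_anti₀ (by linarith) (by linarith [hrle i])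
      have h5 : x i * (1 - x i)⁻¹ ≤ x i * (1 - r)⁻¹ :=
        mul_le_mul_of_nonneg_left h4 (hx0 i)
      linarith
  set L : ℝ := ∑' i, -Real.log (1 - x i) with hLdef
  have hProd : HasProd (fun i => (1 - x i)⁻¹) (Real.exp L) := by
    have hfun : (fun s : Finset ι => ∏ i ∈ s, (1 - x i)⁻¹)
        = fun s : Finset ι => Real.exp (∑ i ∈ s, -Real.log (1 - x i)) := by
      funext s
      rw [Real.exp_sum]
      refine Finset.prod_congr rfl fun i _ => ?_
      rw [Real.exp_neg, Real.exp_log (h1x i)]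
    have hL : HasSum (fun i => -Real.log (1 - x i)) L := hlog.hasSum
    show Filter.Tendsto (fun s : Finset ι => ∏ i ∈ s, (1 - x i)⁻¹)
      Filter.atTop (nhds (Real.exp L))
    rw [hfun]
    exact (Real.continuous_exp.tendsto L).comp hL
  -- double series identity
  have hlogsum : ∀ i, HasSum (fun n : ℕ => x i ^ (n + 1) / ((n : ℝ) + 1))
      (-Real.log (1 - x i)) := by
    intro i
    have h0 := Real.hasSum_pow_div_log_of_abs_lt_one
      (x := x i) (by rw [abs_of_nonneg (hx0 i)]; exact hx1 i)
    exact h0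
  have hu : Summable (Function.uncurry fun (i : ι) (n : ℕ) =>
      x i ^ (n + 1) / ((n : ℝ) + 1)) := by
    refine (summable_prod_of_nonneg fun p => ?_).2
      ⟨fun i => (hlogsum i).summable, ?_⟩
    · exact div_nonneg (pow_nonneg (hx0 p.1) _) (by positivity)
    · exact hlog.congr fun i => ((hlogsum i).tsum_eq).symm
  have hswap : L = ∑' n : ℕ, (∑' i, x i ^ (n + 1)) / ((n : ℝ) + 1) := by
    rw [hLdef]
    have h1 : ∑' i, -Real.log (1 - x i)
        = ∑' (i : ι), ∑' (n : ℕ), x i ^ (n + 1) / ((n : ℝ) + 1) :=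
      tsum_congr fun i => ((hlogsum i).tsum_eq).symm
    rw [h1, ← Summable.tsum_comm' hu (fun i => (hlogsum i).summable) hu.prod_symm.prod_factor]
    exact tsum_congr fun n => by rw [tsum_div_const]
  -- summability of the q-series
  have hsum2 : Summable fun n : ℕ => (q (n + 1) - 1) / ((n : ℝ) + 1) := by
    have hb : Summable fun n : ℕ => (∑' i, x i) * r ^ n :=
      (summable_geometric_of_lt_one hr0 hr1).mul_left _
    refine Summable.of_nonneg_of_le (fun n => ?_) (fun n => ?_) hb
    · rw [hq (n + 1) (by omega), add_sub_cancel_left]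
      exact div_nonneg (tsum_nonneg fun i => pow_nonneg (hx0 i) _) (by positivity)
    · rw [hq (n + 1) (by omega), add_sub_cancel_left]
      have h1 : (∑' i, x i ^ (n + 1)) ≤ r ^ n * ∑' i, x i := by
        rw [← tsum_mul_left]
        refine Summable.tsum_le_tsum (fun i => ?_) (hpow (n + 1) (by omega)) (hsum.mul_left _)
        calc x i ^ (n + 1) = x i ^ n * x i := by ring
          _ ≤ r ^ n * x i :=
            mul_le_mul_of_nonneg_right (pow_le_pow_left₀ (hx0 i) (hrle i) n) (hx0 i)
      have h2 : (∑' i, x i ^ (n + 1)) / ((n : ℝ) + 1) ≤ ∑' i, x i ^ (n + 1) :=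
        div_le_self (tsum_nonneg fun i => pow_nonneg (hx0 i) _)
          (le_add_of_nonneg_left (Nat.cast_nonneg n))
      calc (∑' i, x i ^ (n + 1)) / ((n : ℝ) + 1) ≤ ∑' i, x i ^ (n + 1) := h2
        _ ≤ r ^ n * ∑' i, x i := h1
        _ = (∑' i, x i) * r ^ n := by ring
  -- the full Boltzmann sum
  set P : ℝ := Real.exp L with hPdef
  have prodle : ∀ s : Finset ι, ∏ i ∈ s, (1 - x i)⁻¹ ≤ P := by
    intro s
    refine ge_of_tendsto hProd (Filter.eventually_atTop.2 ⟨s, fun t hst => ?_⟩)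
    rw [← Finset.prod_sdiff hst]
    have h1 : (0:ℝ) ≤ ∏ i ∈ s, (1 - x i)⁻¹ :=
      Finset.prod_nonneg fun i _ => inv_nonneg.2 (h1x i).le
    have h2 : (1:ℝ) ≤ ∏ i ∈ t \ s, (1 - x i)⁻¹ := by
      have hp := Finset.prod_le_prod (s := t \ s) (f := fun _ => (1:ℝ))
        (g := fun i => (1 - x i)⁻¹) (fun i _ => zero_le_one)
        (fun i _ => (one_le_inv₀ (h1x i)).2 (by linarith [hx0 i]))
      simpa using hp
    exact le_mul_of_one_le_left h1 h2
  have sumle : ∀ u : Finset (ι →₀ ℕ), ∑ f ∈ u, bw x f ≤ P := by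
    intro u
    set s : Finset ι := u.sup Finsupp.support with hs
    have hsub : ∀ f ∈ u, f.support ⊆ s := fun f hf => Finset.le_sup hf
    have key := hasSum_bw_subtype hx0 hx1 s
    have hemb : Function.Injective (fun f : {f : ι →₀ ℕ // f ∈ u} =>
        (⟨f.1, hsub f.1 f.2⟩ : {f : ι →₀ ℕ // f.support ⊆ s})) := by
      intro a b hab
      simp only [Subtype.mk.injEq] at hab
      exact Subtype.ext hab
    have h1 := sum_le_hasSum (u.attach.map ⟨_, hemb⟩)
      (fun f _ => bw_nonneg hx0 f.1) key
    rw [Finset.sum_map] at h1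
    simp only [Function.Embedding.coeFn_mk] at h1
    rw [Finset.sum_attach u (fun f => bw x f)] at h1
    exact h1.trans (prodle s)
  have hbwsummable : Summable (bw x) :=
    summable_of_sum_le (fun f => bw_nonneg hx0 f) sumle
  have hle2 : P ≤ ∑' f, bw x f := by
    refine le_of_tendsto hProd (Filter.Eventually.of_forall fun s => ?_)
    rw [← (hasSum_bw_subtype hx0 hx1 s).tsum_eq]
    exact Summable.tsum_le_tsum_of_inj (fun f => f.1) Subtype.val_injective
      (fun f _ => bw_nonneg hx0 f) (fun f => le_rfl)
      (hasSum_bw_subtype hx0 hx1 s).summable hbwsummable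
  have hbwP : HasSum (bw x) P :=
    (Summable.hasSum_iff hbwsummable).2
      (le_antisymm (Summable.tsum_le_of_sum_le hbwsummable sumle) hle2)
  -- fibers
  set h : ℕ → ℝ := fun k => ∑' f : {f : ι →₀ ℕ // deg f = k}, bw x f.1 with hhdef
  have hfibS : ∀ k, HasSum (fun f : {f : ι →₀ ℕ // deg f = k} => bw x f.1) (h k) := fun k =>
    (hbwsummable.subtype {f | deg f = k}).hasSum
  have hPsum : HasSum h P := by
    refine HasSum.sigma
      (((Equiv.sigmaFiberEquiv (fun f : ι →₀ ℕ => deg f)).hasSum_iff).2 hbwP) fun b => ?_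
    exact hfibS b
  have hh0 : h 0 = 1 := by
    have hz : deg (0 : ι →₀ ℕ) = 0 := by simp [deg]
    have huniq : ∀ f : {f : ι →₀ ℕ // deg f = 0}, f = ⟨0, hz⟩ := fun f =>
      Subtype.ext (deg_eq_zero f.2)
    show (∑' f : {f : ι →₀ ℕ // deg f = 0}, bw x f.1) = 1
    rw [tsum_eq_single (⟨0, hz⟩ : {f : ι →₀ ℕ // deg f = 0})
      (fun f' hne => absurd (huniq f') hne)]
    exact bw_zero x
  have hNewton : ∀ N : ℕ, (N : ℝ) * h N = ∑ n ∈ Finset.Icc 1 N, (∑' i, x i ^ n) * h (N - n) :=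
    fun N => newton x hx0 hpow hbwsummable N
  -- partial sums
  set S : ℕ → ℝ := fun k => ∑ j ∈ Finset.range (k + 1), h j with hSdef
  have hT : ∀ N : ℕ, ∑ n ∈ Finset.Icc 1 N, (∑' i, x i ^ n) * S (N - n)
      = ∑ m ∈ Finset.Icc 1 N, (m : ℝ) * h m := by
    intro N
    induction N with
    | zero => simp
    | succ N ih =>
      rw [Finset.sum_Icc_succ_top (by omega : 1 ≤ N + 1),
          Finset.sum_Icc_succ_top (by omega : 1 ≤ N + 1)]
      have e1 : ∀ n ∈ Finset.Icc 1 N, (∑' i, x i ^ n) * S (N + 1 - n)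
          = (∑' i, x i ^ n) * S (N - n) + (∑' i, x i ^ n) * h (N - n + 1) := by
        intro n hn
        have hn' := Finset.mem_Icc.1 hn
        rw [(by omega : N + 1 - n = (N - n) + 1)]
        have hS1 : S (N - n + 1) = S (N - n) + h (N - n + 1) := by
          simp only [hSdef]
          rw [Finset.sum_range_succ]
        rw [hS1]
        ring
      rw [Finset.sum_congr rfl e1, Finset.sum_add_distrib, ih]
      have hNewN := hNewton (N + 1)
      rw [Finset.sum_Icc_succ_top (by omega : 1 ≤ N + 1)] at hNewN
      have e3 : ∑ n ∈ Finset.Icc 1 N, (∑' i, x i ^ n) * h (N + 1 - n)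
          = ∑ n ∈ Finset.Icc 1 N, (∑' i, x i ^ n) * h (N - n + 1) :=
        Finset.sum_congr rfl fun n hn => by
          have hn' := Finset.mem_Icc.1 hn
          rw [(by omega : N + 1 - n = N - n + 1)]
      rw [e3, Nat.sub_self] at hNewN
      have hS0 : S (N + 1 - (N + 1)) = h 0 := by
        rw [Nat.sub_self]
        simp [hSdef]
      rw [hS0]
      push_cast at hNewN ⊢
      linarith [hNewN]
  have hVIcc : ∀ N : ℕ, ∑ n ∈ Finset.Icc 1 N, S (N - n) = ∑ k ∈ Finset.range N, S k := by
    intro N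
    refine Finset.sum_nbij' (fun n => N - n) (fun k => N - k) ?_ ?_ ?_ ?_ ?_
    · intro a ha
      have := Finset.mem_Icc.1 ha
      rw [Finset.mem_range]
      show N - a < N
      omega
    · intro a ha
      have := Finset.mem_range.1 ha
      rw [Finset.mem_Icc]
      show 1 ≤ N - a ∧ N - a ≤ N
      omega
    · intro a ha
      have := Finset.mem_Icc.1 ha
      show N - (N - a) = a
      omega
    · intro a ha
      have := Finset.mem_range.1 ha
      show N - (N - a) = a
      omega
    · intro a _
      rfl
  have hV : ∀ N : ℕ, ∑ k ∈ Finset.range N, S k + ∑ m ∈ Finset.Icc 1 N, (m : ℝ) * h m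
      = (N : ℝ) * S N := by
    intro N
    induction N with
    | zero => simp
    | succ N ih =>
      rw [Finset.sum_range_succ, Finset.sum_Icc_succ_top (by omega : 1 ≤ N + 1)]
      have hSsucc : S (N + 1) = S N + h (N + 1) := by
        simp only [hSdef]
        rw [Finset.sum_range_succ]
      rw [hSsucc]
      push_cast
      push_cast at ih
      linear_combination ih
  have hstar : ∀ N : ℕ, 1 ≤ N → ∑ n ∈ Finset.Icc 1 N, q n * S (N - n) = (N : ℝ) * S N := by
    intro N hN
    have e1 : ∀ n ∈ Finset.Icc 1 N, q n * S (N - n)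
        = S (N - n) + (∑' i, x i ^ n) * S (N - n) := fun n hn => by
      rw [hq n (Finset.mem_Icc.1 hn).1]
      ring
    rw [Finset.sum_congr rfl e1, Finset.sum_add_distrib, hT N, hVIcc N, hV N]
  have hAS : ∀ N, A N = S N := by
    intro N
    induction N using Nat.strong_induction_on with
    | _ N ih =>
      match N with
      | 0 =>
        rw [hA0]
        simp [hSdef, hh0]
      | Nat.succ M =>
        rw [hrec (M + 1) (by omega)]
        rw [Finset.sum_congr rfl (fun n hn => by
          have hn' := (Finset.mem_Icc.1 hn).1
          rw [ih (M + 1 - n) (by omega)])]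
        rw [hstar (M + 1) (by omega), one_div,
          inv_mul_cancel_left₀ (Nat.cast_ne_zero.2 (by omega))]
  have htend : Filter.Tendsto A Filter.atTop (nhds P) := by
    have h1 : Filter.Tendsto (fun N : ℕ => ∑ j ∈ Finset.range N, h j)
        Filter.atTop (nhds P) := hPsum.tendsto_sum_nat
    have h2 : Filter.Tendsto S Filter.atTop (nhds P) :=
      (h1.comp (tendsto_add_atTop_nat 1)).congr fun N => rfl
    exact h2.congr fun N => (hAS N).symm
  have htprod : ∏' i, (1 - x i)⁻¹ = P := hProd.tprod_eq
  have hfinal : P = Real.exp (∑' n : ℕ, (q (n + 1) - 1) / ((n : ℝ) + 1)) := by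
    rw [hPdef, hswap]
    congr 1
    exact tsum_congr fun n => by rw [hq (n + 1) (by omega), add_sub_cancel_left]
  exact ⟨hProd.multipliable, hsum2, htprod ▸ htend, htprod ▸ hfinal⟩
end

section
/- Fix an integer d ≥ 3 and reals ρ, λ > 0. Let (N_j) be a sequence of positive integers tending to infinity and set L_j = (N_j/ρ)^{1/d}. For n ≥ 1 let q_n^{(j)} = ∑_{z∈ℤ^d} exp(−π n λ² ‖z‖²/L_j²); define Q^{(j)} : ℕ → ℝ by Q^{(j)}(0) = 1 and Q^{(j)}(N) = (1/N) ∑_{n=1}^{N} q_n^{(j)} Q^{(j)}(N−n); for 1 ≤ n ≤ N_j set ρ_n^{(j)} = ρ · q_n^{(j)} · Q^{(j)}(N_j − n)/(N_j · Q^{(j)}(N_j)), and set ρ_0^{(j)} = ∑_{n=1}^{N_j} ρ_n^{(j)}/q_n^{(j)}. Then lim inf_{j→∞} ρ_0^{(j)} > 0 if and only if there exists c > 0 such that lim inf_{j→∞} ∑_{n : c·N_j^{2/d} < n ≤ N_j} ρ_n^{(j)} > 0. -/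
open Real Filter Finset

lemma nat_gauss_summable {a : ℝ} (ha : 0 < a) :
    Summable (fun n : ℕ => Real.exp (-a * (n : ℝ) ^ 2)) := by
  apply Summable.of_nonneg_of_le (fun n => (Real.exp_pos _).le)
    (f := fun n : ℕ => Real.exp (-a) ^ n)
  · intro n
    rw [← Real.exp_nat_mul]
    apply Real.exp_le_exp.2
    have : (n : ℝ) ≤ (n : ℝ) ^ 2 := by exact_mod_cast Nat.le_self_pow two_ne_zero n
    nlinarith
  · exact summable_geometric_of_lt_one (Real.exp_pos _).le
      (Real.exp_lt_one_iff.2 (by linarith))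

lemma int_gauss_summable {a : ℝ} (ha : 0 < a) :
    Summable (fun k : ℤ => Real.exp (-a * (k : ℝ) ^ 2)) := by
  apply Summable.of_nat_of_neg_add_one
  · exact nat_gauss_summable ha
  · apply ((nat_gauss_summable ha).comp_injective (add_right_injective 1)).congr
    intro n
    show Real.exp _ = Real.exp _
    congr 1
    push_cast
    ring

lemma pi_gauss_summable (d : ℕ) {a : ℝ} (ha : 0 < a) :
    Summable (fun z : Fin d → ℤ => Real.exp (-a * ∑ i, ((z i : ℝ)) ^ 2)) := by
  induction d with
  | zero => exact summable_of_finite_support (Set.toFinite _)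
  | succ n ih =>
    have h := ((int_gauss_summable ha).mul_of_nonneg ih
      (fun k => (Real.exp_pos _).le) (fun z => (Real.exp_pos _).le))
    apply (Equiv.summable_iff (Fin.consEquiv (fun _ : Fin (n+1) => ℤ))).1
    apply h.congr
    intro p
    simp only [Function.comp_apply, Fin.consEquiv_apply]
    rw [← Real.exp_add, Fin.sum_univ_succ]
    simp only [Fin.cons_zero, Fin.cons_succ]
    congr 1
    ring

noncomputable def gSum (d : ℕ) (b : ℝ) : ℝ :=
  ∑' z : Fin d → ℤ, Real.exp (-b * ∑ i, ((z i : ℝ)) ^ 2)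

lemma one_le_gSum (d : ℕ) {b : ℝ} (hb : 0 < b) : 1 ≤ gSum d b := by
  have h := Summable.le_tsum (pi_gauss_summable d hb) 0 (fun z _ => (Real.exp_pos _).le)
  simpa [gSum, neg_mul] using h

lemma gSum_anti (d : ℕ) {b b' : ℝ} (hb : 0 < b) (hbb : b ≤ b') :
    gSum d b' ≤ gSum d b := by
  apply Summable.tsum_le_tsum _ (pi_gauss_summable d (lt_of_lt_of_le hb hbb)) (pi_gauss_summable d hb)
  intro z
  apply Real.exp_le_exp.2
  have hS : 0 ≤ ∑ i, ((z i : ℝ)) ^ 2 := Finset.sum_nonneg fun i _ => sq_nonneg _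
  nlinarith

lemma gSum_lower (d : ℕ) (hd : 0 < d) {b : ℝ} (hb : 0 < b) :
    Real.exp (-Real.pi) * (Real.pi / (b * d)) ^ ((d : ℝ) / 2) ≤ gSum d b := by
  set x : ℝ := Real.pi / (b * d) with hx
  have hbd : 0 < b * d := by positivity
  have hxpos : 0 < x := div_pos Real.pi_pos hbd
  set r : ℝ := x ^ ((1 : ℝ) / 2) with hr
  have hrpos : 0 < r := Real.rpow_pos_of_pos hxpos _
  set K : ℕ := ⌊r⌋₊ with hK
  have hKr : (K : ℝ) ≤ r := Nat.floor_le hrpos.le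
  have hrK : r ≤ 2 * K + 1 := by
    have := Nat.lt_floor_add_one r
    push_cast at this ⊢
    linarith [Nat.cast_nonneg (α := ℝ) K]
  have hr2 : r ^ 2 = x := by
    rw [hr, ← Real.rpow_natCast (x ^ ((1:ℝ)/2)) 2, ← Real.rpow_mul hxpos.le]
    norm_num
  set S : Finset (Fin d → ℤ) := Fintype.piFinset (fun _ => Finset.Icc (-(K : ℤ)) K) with hS
  have hcard : S.card = (2 * K + 1) ^ d := by
    rw [hS, Fintype.card_piFinset]
    simp [Int.card_Icc]
    congr 1
    omega
  have hterm : ∀ z ∈ S, Real.exp (-Real.pi) ≤ Real.exp (-b * ∑ i, ((z i : ℝ)) ^ 2) := by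
    intro z hz
    apply Real.exp_le_exp.2
    have hzi : ∀ i, ((z i : ℝ)) ^ 2 ≤ (K : ℝ) ^ 2 := by
      intro i
      have := Fintype.mem_piFinset.1 hz i
      rw [Finset.mem_Icc] at this
      have h1 : (-(K:ℝ)) ≤ (z i : ℝ) := by exact_mod_cast this.1
      have h2 : ((z i : ℝ)) ≤ K := by exact_mod_cast this.2
      nlinarith
    have hsum : ∑ i, ((z i : ℝ)) ^ 2 ≤ d * (K : ℝ) ^ 2 := by
      calc ∑ i, ((z i : ℝ)) ^ 2 ≤ ∑ _i : Fin d, (K : ℝ) ^ 2 :=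
            Finset.sum_le_sum fun i _ => hzi i
        _ = d * (K : ℝ) ^ 2 := by simp [mul_comm]
    have hK2 : (K : ℝ) ^ 2 ≤ x := by nlinarith
    have : b * (d * (K : ℝ) ^ 2) ≤ Real.pi := by
      calc b * (d * (K : ℝ) ^ 2) ≤ b * (d * x) := by
            apply mul_le_mul_of_nonneg_left _ hb.le
            exact mul_le_mul_of_nonneg_left hK2 (Nat.cast_nonneg d)
        _ = Real.pi := by
            rw [hx]
            field_simp
    nlinarith [hb.le, Nat.cast_nonneg (α := ℝ) d]
  calc Real.exp (-Real.pi) * x ^ ((d : ℝ) / 2)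
      = Real.exp (-Real.pi) * r ^ d := by
        rw [hr, ← Real.rpow_natCast (x ^ ((1:ℝ)/2)) d, ← Real.rpow_mul hxpos.le]
        congr 1
        ring
    _ ≤ Real.exp (-Real.pi) * ((2 * K + 1 : ℕ) : ℝ) ^ d := by
        apply mul_le_mul_of_nonneg_left _ (Real.exp_pos _).le
        apply pow_le_pow_left₀ hrpos.le
        push_cast
        linarith
    _ = ∑ _z ∈ S, Real.exp (-Real.pi) := by
        rw [Finset.sum_const, hcard]
        push_cast
        ring
    _ ≤ ∑ z ∈ S, Real.exp (-b * ∑ i, ((z i : ℝ)) ^ 2) := Finset.sum_le_sum hterm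
    _ ≤ gSum d b := Summable.sum_le_tsum S (fun z _ => (Real.exp_pos _).le) (pi_gauss_summable d hb)

/-- First step of the two-step proof for the ideal Bose gas: in the thermodynamic limit
at fixed density `ρ`, the condensate density `ρ0` has positive liminf if and only if a
positive fraction of the density lies in permutation cycles of length at least
`c · N^{2/d}` for some `c > 0`. -/
theorem ideal_gas_BEC_iff_long_cycles (d : ℕ) (hd : 3 ≤ d)
    (ρ lam : ℝ) (hρ : 0 < ρ) (hlam : 0 < lam)
    (N : ℕ → ℕ) (hN1 : ∀ j, 1 ≤ N j)
    (hNtop : Filter.Tendsto N Filter.atTop Filter.atTop)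
    (L : ℕ → ℝ) (hL : ∀ j, L j = ((N j : ℝ) / ρ) ^ ((1 : ℝ) / d))
    (q : ℕ → ℕ → ℝ)
    (hq : ∀ j n, q j n = ∑' z : Fin d → ℤ,
      Real.exp (-Real.pi * n * lam ^ 2 * (∑ i, ((z i : ℝ)) ^ 2) / (L j) ^ 2))
    (Q : ℕ → ℕ → ℝ) (hQ0 : ∀ j, Q j 0 = 1)
    (hQ : ∀ j M, 1 ≤ M →
      Q j M = (1 / (M : ℝ)) * ∑ n ∈ Finset.Icc 1 M, q j n * Q j (M - n))
    (ρn : ℕ → ℕ → ℝ)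
    (hρn : ∀ j n, 1 ≤ n → n ≤ N j →
      ρn j n = ρ * q j n * Q j (N j - n) / ((N j : ℝ) * Q j (N j)))
    (ρ0 : ℕ → ℝ)
    (hρ0 : ∀ j, ρ0 j = ∑ n ∈ Finset.Icc 1 (N j), ρn j n / q j n) :
    0 < Filter.liminf ρ0 Filter.atTop ↔
      ∃ c : ℝ, 0 < c ∧
        0 < Filter.liminf (fun j =>
          ∑ n ∈ (Finset.Icc 1 (N j)).filter
            (fun n : ℕ => c * (N j : ℝ) ^ ((2 : ℝ) / d) < (n : ℝ)), ρn j n)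
          Filter.atTop := by
  classical
  have hd0 : 0 < d := by omega
  have hdR : (0 : ℝ) < d := by exact_mod_cast hd0
  have hNpos : ∀ j, 0 < (N j : ℝ) := fun j => by exact_mod_cast hN1 j
  have hNρ : ∀ j, 0 < (N j : ℝ) / ρ := fun j => div_pos (hNpos j) hρ
  have hLpos : ∀ j, 0 < L j := fun j => by
    rw [hL j]; exact Real.rpow_pos_of_pos (hNρ j) _
  have hPpos : ∀ j, 0 < (N j : ℝ) ^ ((2 : ℝ) / d) :=
    fun j => Real.rpow_pos_of_pos (hNpos j) _
  have hrdpos : 0 < ρ ^ ((2 : ℝ) / d) := Real.rpow_pos_of_pos hρ _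
  have hL2 : ∀ j, (L j) ^ 2 = (N j : ℝ) ^ ((2 : ℝ) / d) / ρ ^ ((2 : ℝ) / d) := by
    intro j
    have he : ((1:ℝ)/d) * ((2:ℕ) : ℝ) = 2/d := by push_cast; ring
    rw [hL j, ← Real.rpow_natCast _ 2, ← Real.rpow_mul (hNρ j).le, he,
      Real.div_rpow (hNpos j).le hρ.le]
  have hqg : ∀ j n, q j n = gSum d (Real.pi * n * lam ^ 2 / (L j) ^ 2) := by
    intro j n
    rw [hq j n, gSum]
    exact tsum_congr fun z => by congr 1; ring
  have hbpos : ∀ (j : ℕ) (n : ℕ), 1 ≤ n → 0 < Real.pi * (n : ℝ) * lam ^ 2 / (L j) ^ 2 := by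
    intro j n hn
    have h1 : (0:ℝ) < (n : ℝ) := by exact_mod_cast Nat.lt_of_lt_of_le Nat.zero_lt_one hn
    have h2 := hLpos j
    positivity
  have hq1 : ∀ j n, 1 ≤ n → 1 ≤ q j n := fun j n hn =>
    (hqg j n) ▸ one_le_gSum d (hbpos j n hn)
  have hqpos : ∀ j n, 1 ≤ n → 0 < q j n := fun j n hn =>
    lt_of_lt_of_le one_pos (hq1 j n hn)
  have hQpos : ∀ j M, 0 < Q j M := by
    intro j M
    induction M using Nat.strong_induction_on with
    | _ M ih =>
      rcases Nat.eq_zero_or_pos M with h0 | h1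
      · rw [h0, hQ0 j]; norm_num
      · rw [hQ j M h1]
        have hM : (0:ℝ) < M := by exact_mod_cast h1
        apply mul_pos (by positivity)
        apply Finset.sum_pos
        · intro n hn
          rw [Finset.mem_Icc] at hn
          exact mul_pos (hqpos j n hn.1) (ih (M - n) (by omega))
        · exact ⟨1, Finset.mem_Icc.2 ⟨le_refl 1, h1⟩⟩
  have hρn_nonneg : ∀ j n, n ∈ Finset.Icc 1 (N j) → 0 ≤ ρn j n := by
    intro j n hn
    rw [Finset.mem_Icc] at hn
    rw [hρn j n hn.1 hn.2]
    have h1 := hqpos j n hn.1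
    have h2 := hQpos j (N j - n)
    have h3 := hQpos j (N j)
    have h4 := hNpos j
    positivity
  have hsum_ρn : ∀ j, ∑ n ∈ Finset.Icc 1 (N j), ρn j n = ρ := by
    intro j
    have hrec := hQ j (N j) (hN1 j)
    have hQN := hQpos j (N j)
    have hNne : (N j : ℝ) ≠ 0 := (hNpos j).ne'
    have hsum : ∑ n ∈ Finset.Icc 1 (N j), q j n * Q j (N j - n)
        = (N j : ℝ) * Q j (N j) := by
      rw [hrec]; field_simp
    have heq : ∑ n ∈ Finset.Icc 1 (N j), ρn j n
        = (∑ n ∈ Finset.Icc 1 (N j), q j n * Q j (N j - n)) * ρ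
          / ((N j : ℝ) * Q j (N j)) := by
      rw [Finset.sum_mul, Finset.sum_div]
      refine Finset.sum_congr rfl fun n hn => ?_
      rw [Finset.mem_Icc] at hn
      rw [hρn j n hn.1 hn.2]; ring
    rw [heq, hsum]
    field_simp
  have hρ0_nonneg : ∀ j, 0 ≤ ρ0 j := by
    intro j
    rw [hρ0 j]
    exact Finset.sum_nonneg fun n hn => div_nonneg (hρn_nonneg j n hn)
      (hqpos j n (Finset.mem_Icc.1 hn).1).le
  have hρ0_le : ∀ j, ρ0 j ≤ ρ := by
    intro j
    rw [hρ0 j]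
    calc ∑ n ∈ Finset.Icc 1 (N j), ρn j n / q j n
        ≤ ∑ n ∈ Finset.Icc 1 (N j), ρn j n :=
          Finset.sum_le_sum fun n hn =>
            div_le_self (hρn_nonneg j n hn) (hq1 j n (Finset.mem_Icc.1 hn).1)
      _ = ρ := hsum_ρn j
  have hS_nonneg : ∀ (c : ℝ) j, 0 ≤ ∑ n ∈ (Finset.Icc 1 (N j)).filter
      (fun n : ℕ => c * (N j : ℝ) ^ ((2 : ℝ) / d) < (n : ℝ)), ρn j n := fun c j =>
    Finset.sum_nonneg fun n hn => hρn_nonneg j n (Finset.mem_filter.1 hn).1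
  have hS_le : ∀ (c : ℝ) j, (∑ n ∈ (Finset.Icc 1 (N j)).filter
      (fun n : ℕ => c * (N j : ℝ) ^ ((2 : ℝ) / d) < (n : ℝ)), ρn j n) ≤ ρ := by
    intro c j
    rw [← hsum_ρn j]
    exact Finset.sum_le_sum_of_subset_of_nonneg (Finset.filter_subset _ _)
      (fun n hn _ => hρn_nonneg j n hn)
  constructor
  · -- BEC implies long cycles
    intro h
    set ε := Filter.liminf ρ0 Filter.atTop with hε
    set A : ℝ := lam ^ 2 * ρ ^ ((2 : ℝ) / d) * d with hA
    have hApos : 0 < A := by positivity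
    set M : ℝ := ρ * Real.exp Real.pi * A ^ ((d : ℝ) / 2) with hM
    have hMpos : 0 < M := by positivity
    set c : ℝ := min 1 (ε / (4 * M)) with hc
    have hcpos : 0 < c := lt_min one_pos (by positivity)
    have hc1 : c ≤ 1 := min_le_left _ _
    refine ⟨c, hcpos, ?_⟩
    set B : ℝ := Real.exp (-Real.pi) * ((A * c)⁻¹) ^ ((d : ℝ) / 2) with hB
    have hBpos : 0 < B := by positivity
    -- lower bound on q for short cycles
    have hq_short : ∀ j n, n ∈ Finset.Icc 1 (N j) →
        (n : ℝ) ≤ c * (N j : ℝ) ^ ((2 : ℝ) / d) → B ≤ q j n := by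
      intro j n hn hshort
      rw [Finset.mem_Icc] at hn
      have hb1 : Real.pi * n * lam ^ 2 / (L j) ^ 2
          ≤ Real.pi * c * lam ^ 2 * ρ ^ ((2 : ℝ) / d) := by
        rw [hL2 j, div_le_iff₀ (div_pos (hPpos j) hrdpos)]
        have hkey : Real.pi * c * lam ^ 2 * ρ ^ ((2:ℝ)/d) *
            ((N j : ℝ) ^ ((2:ℝ)/d) / ρ ^ ((2:ℝ)/d))
            = Real.pi * c * lam ^ 2 * (N j : ℝ) ^ ((2:ℝ)/d) := by
          field_simp
        rw [hkey]
        have := mul_le_mul_of_nonneg_left hshort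
          (show (0:ℝ) ≤ Real.pi * lam ^ 2 by positivity)
        nlinarith [Real.pi_pos, sq_nonneg lam]
      have heq : (A * c)⁻¹ = Real.pi / (Real.pi * c * lam ^ 2 * ρ ^ ((2:ℝ)/d) * d) := by
        rw [hA]
        rw [eq_div_iff (by positivity)]
        field_simp
      calc B = Real.exp (-Real.pi) *
            (Real.pi / (Real.pi * c * lam ^ 2 * ρ ^ ((2:ℝ)/d) * d)) ^ ((d : ℝ) / 2) := by
            rw [hB, heq]
        _ ≤ gSum d (Real.pi * c * lam ^ 2 * ρ ^ ((2:ℝ)/d)) := gSum_lower d hd0 (by positivity)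
        _ ≤ gSum d (Real.pi * n * lam ^ 2 / (L j) ^ 2) :=
            gSum_anti d (hbpos j n hn.1) hb1
        _ = q j n := (hqg j n).symm
    -- ρ/B is small
    have hρB : ρ / B ≤ ε / 4 := by
      have h1 : ρ / B = M * c ^ ((d:ℝ)/2) := by
        rw [hB, hM, Real.inv_rpow (by positivity), Real.mul_rpow hApos.le hcpos.le,
          Real.exp_neg]
        have e1 : (0:ℝ) < A ^ ((d:ℝ)/2) := by positivity
        have e2 : (0:ℝ) < c ^ ((d:ℝ)/2) := by positivity
        field_simp
      have h2 : c ^ ((d:ℝ)/2) ≤ c := by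
        have h3 : (1:ℝ) ≤ (d:ℝ)/2 := by
          rw [le_div_iff₀ (by norm_num : (0:ℝ) < 2)]
          exact_mod_cast (by omega : 2 ≤ d)
        have := Real.rpow_le_rpow_of_exponent_ge hcpos hc1 h3
        simpa [Real.rpow_one] using this
      have h4 : M * c ≤ ε / 4 := by
        have hcle : c ≤ ε / (4 * M) := min_le_right _ _
        calc M * c ≤ M * (ε / (4 * M)) := by
              exact mul_le_mul_of_nonneg_left hcle hMpos.le
          _ = ε / 4 := by field_simp
      calc ρ / B = M * c ^ ((d:ℝ)/2) := h1
        _ ≤ M * c := mul_le_mul_of_nonneg_left h2 hMpos.le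
        _ ≤ ε / 4 := h4
    -- pointwise bound
    have hpoint : ∀ j, ρ0 j ≤ ε / 4 + ∑ n ∈ (Finset.Icc 1 (N j)).filter
        (fun n : ℕ => c * (N j : ℝ) ^ ((2 : ℝ) / d) < (n : ℝ)), ρn j n := by
      intro j
      rw [hρ0 j, ← Finset.sum_filter_add_sum_filter_not (Finset.Icc 1 (N j))
        (fun n : ℕ => c * (N j : ℝ) ^ ((2 : ℝ) / d) < (n : ℝ))]
      have hlong : (∑ n ∈ (Finset.Icc 1 (N j)).filter
          (fun n : ℕ => c * (N j : ℝ) ^ ((2 : ℝ) / d) < (n : ℝ)), ρn j n / q j n)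
          ≤ ∑ n ∈ (Finset.Icc 1 (N j)).filter
          (fun n : ℕ => c * (N j : ℝ) ^ ((2 : ℝ) / d) < (n : ℝ)), ρn j n := by
        refine Finset.sum_le_sum fun n hn => ?_
        have hn' := (Finset.mem_filter.1 hn).1
        exact div_le_self (hρn_nonneg j n hn') (hq1 j n (Finset.mem_Icc.1 hn').1)
      have hshort : (∑ n ∈ (Finset.Icc 1 (N j)).filter
          (fun n : ℕ => ¬ c * (N j : ℝ) ^ ((2 : ℝ) / d) < (n : ℝ)), ρn j n / q j n)
          ≤ ρ / B := by
        calc (∑ n ∈ (Finset.Icc 1 (N j)).filter (fun n : ℕ => ¬ c * (N j : ℝ) ^ ((2 : ℝ) / d) < (n : ℝ)), ρn j n / q j n)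
            ≤ ∑ n ∈ (Finset.Icc 1 (N j)).filter (fun n : ℕ => ¬ c * (N j : ℝ) ^ ((2 : ℝ) / d) < (n : ℝ)), ρn j n / B := by
              refine Finset.sum_le_sum fun n hn => ?_
              rw [Finset.mem_filter] at hn
              have hqn := hq_short j n hn.1 (not_lt.1 hn.2)
              gcongr
              exact hρn_nonneg j n hn.1
          _ = (∑ n ∈ (Finset.Icc 1 (N j)).filter (fun n : ℕ => ¬ c * (N j : ℝ) ^ ((2 : ℝ) / d) < (n : ℝ)), ρn j n) / B := by
              rw [Finset.sum_div]
          _ ≤ ρ / B := by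
              gcongr
              rw [← hsum_ρn j]
              exact Finset.sum_le_sum_of_subset_of_nonneg (Finset.filter_subset _ _)
                (fun n hn _ => hρn_nonneg j n hn)
      linarith
    have hcob : IsCoboundedUnder (· ≥ ·) Filter.atTop ρ0 :=
      Filter.isCoboundedUnder_ge_of_le Filter.atTop hρ0_le
    have hbdd : Filter.IsBoundedUnder (· ≥ ·) Filter.atTop ρ0 :=
      Filter.isBoundedUnder_of ⟨0, fun j => hρ0_nonneg j⟩
    have hev : ∀ᶠ j in Filter.atTop, ε / 2 < ρ0 j :=
      Filter.eventually_lt_of_lt_liminf (by linarith) hbdd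
    have hev2 : ∀ᶠ j in Filter.atTop, ε / 4 ≤ ∑ n ∈ (Finset.Icc 1 (N j)).filter
        (fun n : ℕ => c * (N j : ℝ) ^ ((2 : ℝ) / d) < (n : ℝ)), ρn j n := by
      filter_upwards [hev] with j hj
      have := hpoint j
      linarith
    have hcobS : IsCoboundedUnder (· ≥ ·) Filter.atTop (fun j =>
        ∑ n ∈ (Finset.Icc 1 (N j)).filter
          (fun n : ℕ => c * (N j : ℝ) ^ ((2 : ℝ) / d) < (n : ℝ)), ρn j n) :=
      Filter.isCoboundedUnder_ge_of_le Filter.atTop (hS_le c)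
    have hfin := Filter.le_liminf_of_le hcobS hev2
    linarith
  · -- long cycles imply BEC
    rintro ⟨c, hcpos, h⟩
    have hapos : (0:ℝ) < Real.pi * c * lam ^ 2 * ρ ^ ((2:ℝ)/d) := by positivity
    set Ca : ℝ := gSum d (Real.pi * c * lam ^ 2 * ρ ^ ((2:ℝ)/d)) with hCadef
    have hCa1 : 1 ≤ Ca := one_le_gSum d hapos
    have hCapos : 0 < Ca := by linarith
    have hq_long : ∀ j n, n ∈ Finset.Icc 1 (N j) →
        c * (N j : ℝ) ^ ((2 : ℝ) / d) < (n : ℝ) → q j n ≤ Ca := by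
      intro j n hn hlong
      rw [Finset.mem_Icc] at hn
      rw [hqg j n, hCadef]
      apply gSum_anti d hapos
      rw [hL2 j, le_div_iff₀ (div_pos (hPpos j) hrdpos)]
      have hkey : Real.pi * c * lam ^ 2 * ρ ^ ((2:ℝ)/d) *
          ((N j : ℝ) ^ ((2:ℝ)/d) / ρ ^ ((2:ℝ)/d))
          = Real.pi * c * lam ^ 2 * (N j : ℝ) ^ ((2:ℝ)/d) := by
        field_simp
      rw [hkey]
      have := mul_le_mul_of_nonneg_left hlong.le
        (show (0:ℝ) ≤ Real.pi * lam ^ 2 by positivity)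
      nlinarith [Real.pi_pos, sq_nonneg lam]
    have hpoint : ∀ j, (∑ n ∈ (Finset.Icc 1 (N j)).filter
        (fun n : ℕ => c * (N j : ℝ) ^ ((2 : ℝ) / d) < (n : ℝ)), ρn j n) / Ca ≤ ρ0 j := by
      intro j
      rw [hρ0 j]
      calc (∑ n ∈ (Finset.Icc 1 (N j)).filter
          (fun n : ℕ => c * (N j : ℝ) ^ ((2 : ℝ) / d) < (n : ℝ)), ρn j n) / Ca
          = ∑ n ∈ (Finset.Icc 1 (N j)).filter
            (fun n : ℕ => c * (N j : ℝ) ^ ((2 : ℝ) / d) < (n : ℝ)), ρn j n / Ca := by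
            rw [Finset.sum_div]
        _ ≤ ∑ n ∈ (Finset.Icc 1 (N j)).filter
            (fun n : ℕ => c * (N j : ℝ) ^ ((2 : ℝ) / d) < (n : ℝ)), ρn j n / q j n := by
            refine Finset.sum_le_sum fun n hn => ?_
            have hmem := Finset.mem_filter.1 hn
            have hq' := hq_long j n hmem.1 hmem.2
            gcongr
            · exact hρn_nonneg j n hmem.1
            · exact hqpos j n (Finset.mem_Icc.1 hmem.1).1
        _ ≤ ∑ n ∈ Finset.Icc 1 (N j), ρn j n / q j n :=
            Finset.sum_le_sum_of_subset_of_nonneg (Finset.filter_subset _ _)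
              (fun n hn _ => div_nonneg (hρn_nonneg j n hn)
                (hqpos j n (Finset.mem_Icc.1 hn).1).le)
    set lS := Filter.liminf (fun j =>
        ∑ n ∈ (Finset.Icc 1 (N j)).filter
          (fun n : ℕ => c * (N j : ℝ) ^ ((2 : ℝ) / d) < (n : ℝ)), ρn j n)
        Filter.atTop with hlS
    have hcobS : IsCoboundedUnder (· ≥ ·) Filter.atTop (fun j =>
        ∑ n ∈ (Finset.Icc 1 (N j)).filter
          (fun n : ℕ => c * (N j : ℝ) ^ ((2 : ℝ) / d) < (n : ℝ)), ρn j n) :=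
      Filter.isCoboundedUnder_ge_of_le Filter.atTop (hS_le c)
    have hev : ∀ᶠ j in Filter.atTop, lS / 2 < ∑ n ∈ (Finset.Icc 1 (N j)).filter
        (fun n : ℕ => c * (N j : ℝ) ^ ((2 : ℝ) / d) < (n : ℝ)), ρn j n :=
      Filter.eventually_lt_of_lt_liminf (by linarith)
        (Filter.isBoundedUnder_of ⟨0, fun j => hS_nonneg c j⟩)
    have hev2 : ∀ᶠ j in Filter.atTop, lS / 2 / Ca ≤ ρ0 j := by
      filter_upwards [hev] with j hj
      have h1 : lS / 2 / Ca ≤ (∑ n ∈ (Finset.Icc 1 (N j)).filter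
          (fun n : ℕ => c * (N j : ℝ) ^ ((2 : ℝ) / d) < (n : ℝ)), ρn j n) / Ca := by
        exact (div_le_div_iff_of_pos_right hCapos).2 hj.le
      exact le_trans h1 (hpoint j)
    have hcob0 : IsCoboundedUnder (· ≥ ·) Filter.atTop ρ0 :=
      Filter.isCoboundedUnder_ge_of_le Filter.atTop hρ0_le
    have hfin := Filter.le_liminf_of_le hcob0 hev2
    have : 0 < lS / 2 / Ca := by positivity
    linarith
end

section
/- Let V and E be finite types, and let s, t : E → V satisfy s(e) ≠ t(e) for every e (a finite loopless multigraph). Define the matrix A : V × E → ℚ by A(v,e) = 1 if t(e) = v, A(v,e) = −1 if s(e) = v, and 0 otherwise. Let m be the number of equivalence classes of the equivalence relation on V generated by the relation 'there is an edge with endpoints u and w' (the number of maximal connected components). Then the rank of A equals (card V) − m. -/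
/-- For a finite loopless multigraph whose edges couple the vertices into `m` maximal
connected components, the incidence matrix `A` (with `A v e = 1` if `t e = v`, `-1` if
`s e = v`, `0` otherwise) has rank `card V - m`. -/
theorem incidence_rank_components {V E : Type*}
    [Fintype V] [Fintype E] [DecidableEq V]
    (s t : E → V) (hst : ∀ e, s e ≠ t e)
    (A : Matrix V E ℚ)
    (hA : ∀ v e, A v e = if t e = v then 1 else if s e = v then -1 else 0)
    (m : ℕ)
    (hm : m = Nat.card
      (Quot (fun u w : V => ∃ e, (s e = u ∧ t e = w) ∨ (s e = w ∧ t e = u)))) :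
    A.rank = Fintype.card V - m := by
  classical
  set r : V → V → Prop := fun u w => ∃ e, (s e = u ∧ t e = w) ∨ (s e = w ∧ t e = u) with hr
  set f : (V → ℚ) →ₗ[ℚ] (E → ℚ) := (Matrix.transpose A).mulVecLin with hf
  have key : ∀ (x : V → ℚ) (e : E), (Matrix.transpose A).mulVec x e = x (t e) - x (s e) := by
    intro x e
    have hpt : ∀ v, (Matrix.transpose A) e v * x v
        = (if t e = v then x v else 0) - (if s e = v then x v else 0) := by
      intro v
      rw [Matrix.transpose_apply, hA]
      by_cases h1 : t e = v <;> by_cases h2 : s e = v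
      · exact absurd (h2.trans h1.symm) (hst e)
      · simp [h1, h2]
      · simp [h1, h2]
      · simp [h1, h2]
    simp only [Matrix.mulVec, dotProduct]
    rw [Finset.sum_congr rfl fun v _ => hpt v, Finset.sum_sub_distrib]
    simp
  have hker : ∀ x : V → ℚ, x ∈ LinearMap.ker f ↔ ∀ e, x (t e) = x (s e) := by
    intro x
    rw [LinearMap.mem_ker]
    constructor
    · intro h e
      have := congrFun h e
      rw [hf, Matrix.mulVecLin_apply, key] at this
      simp only [Pi.zero_apply] at this
      linarith
    · intro h
      funext e
      rw [hf, Matrix.mulVecLin_apply, key, h e]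
      simp
  have hresp : ∀ x : V → ℚ, x ∈ LinearMap.ker f → ∀ u w, r u w → x u = x w := by
    rintro x hx u w ⟨e, ⟨h1, h2⟩ | ⟨h1, h2⟩⟩
    · rw [← h1, ← h2]; exact ((hker x).mp hx e).symm
    · rw [← h1, ← h2]; exact (hker x).mp hx e
  let φ : (Quot r → ℚ) →ₗ[ℚ] (V → ℚ) :=
    { toFun := fun y v => y (Quot.mk r v)
      map_add' := fun _ _ => rfl
      map_smul' := fun _ _ => rfl }
  have hφinj : Function.Injective φ := by
    intro y z h
    funext q
    induction q using Quot.ind with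
    | _ v => exact congrFun h v
  have hφrange : LinearMap.range φ = LinearMap.ker f := by
    ext x
    constructor
    · rintro ⟨y, rfl⟩
      rw [hker]
      intro e
      show y (Quot.mk r (t e)) = y (Quot.mk r (s e))
      exact congrArg y (Quot.sound ⟨e, Or.inl ⟨rfl, rfl⟩⟩).symm
    · intro hx
      exact ⟨Quot.lift x (fun u w h => hresp x hx u w h), by funext v; rfl⟩
  have hQfin : Finite (Quot r) := Finite.of_surjective (Quot.mk r) Quot.mk_surjective
  have hQfty : Fintype (Quot r) := Fintype.ofFinite _
  have e1 : (Quot r → ℚ) ≃ₗ[ℚ] LinearMap.ker f :=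
    (LinearEquiv.ofInjective φ hφinj).trans (LinearEquiv.ofEq _ _ hφrange)
  have hkerdim : Module.finrank ℚ (LinearMap.ker f) = m := by
    rw [← e1.finrank_eq, Module.finrank_fintype_fun_eq_card, hm, Nat.card_eq_fintype_card]
  have hrn : Module.finrank ℚ (LinearMap.range f) + Module.finrank ℚ (LinearMap.ker f)
      = Fintype.card V := by
    rw [LinearMap.finrank_range_add_finrank_ker f]
    simp [Module.finrank_fintype_fun_eq_card]
  have hrank : A.rank = Module.finrank ℚ (LinearMap.range f) := by
    rw [← Matrix.rank_transpose A]
    rfl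
  omega
end

section
/- Let V and E be finite types, and let s, t : E → V satisfy s(e) ≠ t(e) for every e (a finite loopless multigraph). Then the following are equivalent: (1) there exists x : E → ℤ with x(e) ≠ 0 for every e such that for every vertex v, ∑_{e : t(e)=v} x(e) = ∑_{e : s(e)=v} x(e); (2) every edge lies on a circuit, i.e. for every edge e₀, the vertices s(e₀) and t(e₀) are related by the reflexive–transitive closure of the relation 'there is an edge e ≠ e₀ with endpoints u and w'. -/
open Finset

/-- Digit lemma: a nonzero base-`M` expansion with digits of absolute value `< M`
is nonzero. -/
lemma digit_lemma {n : ℕ} (M : ℤ) (f : Fin n → ℤ) (hM : ∀ i, |f i| < M)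
    (j : Fin n) (hj : f j ≠ 0) : ∑ i : Fin n, M ^ (i : ℕ) * f i ≠ 0 := by
  have hM0 : 0 < M := lt_of_le_of_lt (abs_nonneg _) (hM j)
  set T : Finset (Fin n) := univ.filter (fun i => f i ≠ 0) with hT
  have hjT : j ∈ T := by simp [hT, hj]
  have hTne : T.Nonempty := ⟨j, hjT⟩
  set i₀ := T.min' hTne with hi₀
  have hi₀T : i₀ ∈ T := T.min'_mem hTne
  have hfi₀ : f i₀ ≠ 0 := by simpa [hT] using hi₀T
  intro h
  have hsplit : M ^ (i₀ : ℕ) * f i₀ + ∑ i ∈ univ.erase i₀, M ^ (i : ℕ) * f i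
      = ∑ i : Fin n, M ^ (i : ℕ) * f i :=
    Finset.add_sum_erase _ (fun i : Fin n => M ^ (i : ℕ) * f i) (mem_univ i₀)
  have hdvd : (M ^ ((i₀ : ℕ) + 1)) ∣ ∑ i ∈ univ.erase i₀, M ^ (i : ℕ) * f i := by
    refine Finset.dvd_sum ?_
    intro i hi
    have hne : i ≠ i₀ := (Finset.mem_erase.mp hi).1
    by_cases hfi : f i = 0
    · simp [hfi]
    · have hiT : i ∈ T := by simp [hT, hfi]
      have hle : i₀ ≤ i := T.min'_le i hiT
      have hlt : (i₀ : ℕ) < (i : ℕ) := by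
        have : i₀ < i := lt_of_le_of_ne hle (Ne.symm hne)
        exact_mod_cast this
      exact Dvd.dvd.mul_right (pow_dvd_pow M hlt) _
  have hdvd2 : (M ^ ((i₀ : ℕ) + 1)) ∣ M ^ (i₀ : ℕ) * f i₀ := by
    have : M ^ (i₀ : ℕ) * f i₀ = -(∑ i ∈ univ.erase i₀, M ^ (i : ℕ) * f i) := by
      omega
    rw [this]
    exact dvd_neg.mpr hdvd
  have hdvd3 : M ∣ f i₀ := by
    rw [pow_succ] at hdvd2
    exact (mul_dvd_mul_iff_left (pow_ne_zero (i₀ : ℕ) hM0.ne')).mp hdvd2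
  have : M ≤ |f i₀| := Int.le_of_dvd (abs_pos.mpr hfi₀) ((dvd_abs _ _).mpr hdvd3)
  exact absurd (hM i₀) (not_lt.mpr this)

section Flows

variable {V E : Type*} [Fintype V] [Fintype E] [DecidableEq V] [DecidableEq E]
  (s t : E → V)

/-- Divergence of an edge-indexed integer vector. -/
def divg (x : E → ℤ) (v : V) : ℤ :=
  (∑ e ∈ Finset.univ.filter (fun e => t e = v), x e) -
    (∑ e ∈ Finset.univ.filter (fun e => s e = v), x e)

lemma divg_add (x y : E → ℤ) (v : V) :
    divg s t (x + y) v = divg s t x v + divg s t y v := by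
  simp only [divg, Pi.add_apply, Finset.sum_add_distrib]
  ring

lemma divg_single (e : E) (k : ℤ) (v : V) :
    divg s t (fun e' => if e' = e then k else 0) v
      = (if v = t e then k else 0) - (if v = s e then k else 0) := by
  simp only [divg]
  rw [Finset.sum_ite_eq' _ e, Finset.sum_ite_eq' _ e]
  simp only [Finset.mem_filter, Finset.mem_univ, true_and]
  congr 1 <;> simp [eq_comm]

/-- Along a walk from `u` to `w` avoiding `e₀`, there is a flow of value 1. -/
lemma flow_of_walk (e₀ : E) {u w : V}
    (h : Relation.ReflTransGen
      (fun u w => ∃ e, e ≠ e₀ ∧ ((s e = u ∧ t e = w) ∨ (s e = w ∧ t e = u))) u w) :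
    ∃ f : E → ℤ, f e₀ = 0 ∧ ∀ v : V,
      divg s t f v = (if v = w then 1 else 0) - (if v = u then 1 else 0) := by
  induction h with
  | refl => exact ⟨0, rfl, fun v => by simp [divg]⟩
  | @tail w' w hsteps hstep ih =>
    obtain ⟨f, hf0, hfd⟩ := ih
    obtain ⟨e, hne, hcase⟩ := hstep
    rcases hcase with ⟨hs, ht⟩ | ⟨hs, ht⟩
    · refine ⟨f + fun e' => if e' = e then 1 else 0, by simp [hf0, Ne.symm hne], fun v => ?_⟩
      rw [divg_add, hfd, divg_single, hs, ht]
      split_ifs <;> ring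
    · refine ⟨f + fun e' => if e' = e then -1 else 0, by simp [hf0, Ne.symm hne], fun v => ?_⟩
      rw [divg_add, hfd, divg_single, hs, ht]
      split_ifs <;> ring

/-- From a circuit through `e₀`, a circulation with value 1 on `e₀`. -/
lemma circ_of_circuit (e₀ : E)
    (h : Relation.ReflTransGen
      (fun u w => ∃ e, e ≠ e₀ ∧ ((s e = u ∧ t e = w) ∨ (s e = w ∧ t e = u)))
      (s e₀) (t e₀)) :
    ∃ c : E → ℤ, c e₀ = 1 ∧ ∀ v : V, divg s t c v = 0 := by
  obtain ⟨f, hf0, hfd⟩ := flow_of_walk s t e₀ h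
  refine ⟨(fun e' => if e' = e₀ then 1 else 0) - f, by simp [hf0], fun v => ?_⟩
  have : divg s t ((fun e' => if e' = e₀ then (1:ℤ) else 0) - f) v
      = divg s t (fun e' => if e' = e₀ then (1:ℤ) else 0) v - divg s t f v := by
    simp only [divg, Pi.sub_apply, Finset.sum_sub_distrib]
    ring
  rw [this, divg_single, hfd]
  ring

end Flows

/-- A finite loopless multigraph admits a nowhere-zero integer circulation (an assignment
of a nonzero integer to every edge such that the signed sums at each vertex vanish) if
and only if every edge lies on a circuit, i.e. for every edge `e₀` the endpoints `s e₀`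
and `t e₀` are connected in the graph with `e₀` removed. -/
theorem nowhere_zero_circulation_iff_every_edge_on_circuit {V E : Type*}
    [Fintype V] [Fintype E] [DecidableEq V] [DecidableEq E]
    (s t : E → V) (hst : ∀ e, s e ≠ t e) :
    (∃ x : E → ℤ, (∀ e, x e ≠ 0) ∧
      ∀ v : V, ∑ e ∈ Finset.univ.filter (fun e => t e = v), x e =
        ∑ e ∈ Finset.univ.filter (fun e => s e = v), x e) ↔
    (∀ e₀ : E, Relation.ReflTransGen
      (fun u w => ∃ e, e ≠ e₀ ∧ ((s e = u ∧ t e = w) ∨ (s e = w ∧ t e = u)))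
      (s e₀) (t e₀)) := by
  classical
  constructor
  · rintro ⟨x, hx0, hx⟩ e₀
    by_contra hnot
    set R : V → V → Prop :=
      fun u w => ∃ e, e ≠ e₀ ∧ ((s e = u ∧ t e = w) ∨ (s e = w ∧ t e = u)) with hR
    have hsym : Symmetric R := by
      rintro u w ⟨e, hne, hc⟩
      exact ⟨e, hne, hc.symm⟩
    set S : Finset V := Finset.univ.filter (fun v => Relation.ReflTransGen R (t e₀) v)
      with hS
    have htS : t e₀ ∈ S := by
      simp only [hS, Finset.mem_filter, Finset.mem_univ, true_and]
      exact Relation.ReflTransGen.refl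
    have hsS : s e₀ ∉ S := by
      simp only [hS, Finset.mem_filter, Finset.mem_univ, true_and]
      intro hcon
      exact hnot (haveI : Std.Symm R := ⟨fun a b h => hsym h⟩; (Relation.ReflTransGen.stdSymm (r := R)).symm _ _ hcon)
    have hclosed : ∀ e : E, e ≠ e₀ → ((t e ∈ S) ↔ (s e ∈ S)) := by
      intro e hne
      simp only [hS, Finset.mem_filter, Finset.mem_univ, true_and]
      constructor
      · intro h; exact h.tail ⟨e, hne, Or.inr ⟨rfl, rfl⟩⟩
      · intro h; exact h.tail ⟨e, hne, Or.inl ⟨rfl, rfl⟩⟩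
    have hzero : (0 : ℤ) = ∑ v ∈ S,
        ((∑ e ∈ Finset.univ.filter (fun e => t e = v), x e) -
          (∑ e ∈ Finset.univ.filter (fun e => s e = v), x e)) := by
      rw [Finset.sum_congr rfl (fun v _ => by rw [hx v, sub_self]), Finset.sum_const_zero]
    rw [Finset.sum_sub_distrib,
      Finset.sum_fiberwise_eq_sum_filter Finset.univ S t x,
      Finset.sum_fiberwise_eq_sum_filter Finset.univ S s x,
      Finset.sum_filter, Finset.sum_filter, ← Finset.sum_sub_distrib] at hzero
    have hterm : ∀ e : E,
        ((if t e ∈ S then x e else 0) - (if s e ∈ S then x e else 0))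
          = (if e = e₀ then x e₀ else 0) := by
      intro e
      by_cases he : e = e₀
      · subst he; simp [htS, hsS]
      · have hiff := hclosed e he
        by_cases h1 : t e ∈ S
        · simp [he, h1, hiff.mp h1]
        · have h2 : s e ∉ S := fun h2 => h1 (hiff.mpr h2)
          simp [he, h1, h2]
    rw [Finset.sum_congr rfl (fun e _ => hterm e),
      Finset.sum_ite_eq' Finset.univ e₀ (fun _ => x e₀)] at hzero
    simp only [Finset.mem_univ, if_true] at hzero
    exact hx0 e₀ hzero.symm
  · intro h
    choose c hc1 hc2 using fun e₀ => circ_of_circuit s t e₀ (h e₀)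
    set φ := Fintype.equivFin E with hφ
    set L : ℤ := ∑ e₀ : E, ∑ e : E, |c e₀ e| with hL
    set M : ℤ := L + 1 with hM
    have habs : ∀ e₀ e : E, |c e₀ e| < M := by
      intro e₀ e
      have h1 : |c e₀ e| ≤ ∑ e' : E, |c e₀ e'| :=
        Finset.single_le_sum (f := fun e' => |c e₀ e'|)
          (fun e' _ => abs_nonneg _) (Finset.mem_univ e)
      have h2 : (∑ e' : E, |c e₀ e'|) ≤ L :=
        Finset.single_le_sum (f := fun e₀' => ∑ e' : E, |c e₀' e'|)
          (fun e₀' _ => Finset.sum_nonneg fun e' _ => abs_nonneg _) (Finset.mem_univ e₀)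
      omega
    refine ⟨fun e => ∑ e₀ : E, M ^ ((φ e₀ : ℕ)) * c e₀ e, ?_, ?_⟩
    · intro e
      have heq : (∑ e₀ : E, M ^ ((φ e₀ : ℕ)) * c e₀ e)
          = ∑ i : Fin (Fintype.card E), M ^ ((i : ℕ)) * c (φ.symm i) e :=
        (Fintype.sum_equiv φ.symm (fun i => M ^ ((i : ℕ)) * c (φ.symm i) e)
          (fun e₀ => M ^ ((φ e₀ : ℕ)) * c e₀ e)
          (fun i => by simp)).symm
      show (∑ e₀ : E, M ^ ((φ e₀ : ℕ)) * c e₀ e) ≠ 0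
      rw [heq]
      exact digit_lemma M (fun i => c (φ.symm i) e) (fun i => habs _ e) (φ e)
        (by simp [hc1 e])
    · intro v
      rw [← sub_eq_zero]
      have : (∑ e ∈ Finset.univ.filter (fun e => t e = v),
            ∑ e₀ : E, M ^ ((φ e₀ : ℕ)) * c e₀ e) -
          (∑ e ∈ Finset.univ.filter (fun e => s e = v),
            ∑ e₀ : E, M ^ ((φ e₀ : ℕ)) * c e₀ e)
          = ∑ e₀ : E, M ^ ((φ e₀ : ℕ)) * divg s t (c e₀) v := by
        rw [Finset.sum_comm, Finset.sum_comm (s := Finset.univ.filter (fun e => s e = v))]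
        rw [← Finset.sum_sub_distrib]
        refine Finset.sum_congr rfl fun e₀ _ => ?_
        rw [divg, mul_sub, Finset.mul_sum, Finset.mul_sum]
      rw [this]
      simp [hc2]
end

section
/- Let n ≥ 2 be an integer and ℓ : ZMod n → ℝ an injective function (distinct labels on the vertices of a circle of length n, where edge i joins vertices i and i+1). Then there exists x : ZMod n → ℤ with x(i) ∈ {1, −1} for every i such that for every vertex i, σ(i, i−1)·x(i−1) + σ(i, i+1)·x(i) = 0, where σ(i, j) = 1 if ℓ(j) > ℓ(i) and σ(i, j) = −1 if ℓ(j) < ℓ(i). -/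
/-- Edge-marking of a labelled circle: for a circle of length `n ≥ 2` with distinct real
labels `ℓ i` on the vertices (edge `i` joining vertices `i` and `i+1`), there is an
assignment `x i ∈ {1, -1}` to the edges such that at every vertex `i` the signed sum
`σ(i, i-1)·x(i-1) + σ(i, i+1)·x(i) = 0`, where the sign `σ(i,j)` is `+1` if `ℓ j > ℓ i`
and `-1` if `ℓ j < ℓ i`. -/
theorem circle_edge_marking (n : ℕ) (hn : 2 ≤ n)
    (ℓ : ZMod n → ℝ) (hℓ : Function.Injective ℓ) :
    ∃ x : ZMod n → ℤ, (∀ i, x i = 1 ∨ x i = -1) ∧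
      ∀ i : ZMod n,
        (if ℓ i < ℓ (i - 1) then (1 : ℤ) else -1) * x (i - 1) +
          (if ℓ i < ℓ (i + 1) then (1 : ℤ) else -1) * x i = 0 := by
  refine ⟨fun i => if ℓ i < ℓ (i + 1) then 1 else -1, fun i => by dsimp only; split <;> simp, ?_⟩
  intro i
  dsimp only
  have h1 : (i - 1 : ZMod n) ≠ i := by
    intro h
    have h10 : (1 : ZMod n) = 0 := by linear_combination -h
    haveI : Fact (1 < n) := ⟨by omega⟩
    exact one_ne_zero (α := ZMod n) h10
  have h2 : i - 1 + 1 = i := by ring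
  rw [h2]
  have hne : ℓ (i - 1) ≠ ℓ i := fun h => h1 (hℓ h)
  by_cases h : ℓ (i - 1) < ℓ i
  · rw [if_neg (not_lt_of_gt h), if_pos h]
    split <;> ring
  · have h' : ℓ i < ℓ (i - 1) := lt_of_le_of_ne (le_of_not_gt h) (Ne.symm hne)
    rw [if_pos h', if_neg h]
    split <;> ring
end

section
/- Let q : ℕ → ℝ be any sequence and C, D ∈ ℝ. Define A : ℕ → ℝ by A(0) = 1 and A(N) = (1/N) ∑_{n=1}^{N} q(n)·A(N−n), and define B : ℕ → ℝ by B(0) = 1 and B(N) = (1/N) ∑_{n=1}^{N} q(n)·exp(−C·(n(N−n) + n(n−1)/2) − D·n)·B(N−n). Then B(N) = exp(−C·N(N−1)/2 − D·N)·A(N) for every N ≥ 0. -/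
/-- Incorporating the quadratic weight `exp(-C(n(N-n)+n(n-1)/2) - Dn)` into the cycle
recursion multiplies the solution of the plain recursion by the global factor
`exp(-C N(N-1)/2 - D N)`. -/
theorem weighted_recursion_identity (q : ℕ → ℝ) (C D : ℝ)
    (A : ℕ → ℝ) (hA0 : A 0 = 1)
    (hA : ∀ N, 1 ≤ N →
      A N = (1 / (N : ℝ)) * ∑ n ∈ Finset.Icc 1 N, q n * A (N - n))
    (B : ℕ → ℝ) (hB0 : B 0 = 1)
    (hB : ∀ N, 1 ≤ N →
      B N = (1 / (N : ℝ)) * ∑ n ∈ Finset.Icc 1 N,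
        q n * Real.exp (-C * ((n : ℝ) * ((N : ℝ) - (n : ℝ)) +
          (n : ℝ) * ((n : ℝ) - 1) / 2) - D * (n : ℝ)) * B (N - n)) :
    ∀ N : ℕ,
      B N = Real.exp (-C * ((N : ℝ) * ((N : ℝ) - 1) / 2) - D * (N : ℝ)) * A N := by
  intro N
  induction N using Nat.strong_induction_on with
  | _ N ih =>
    rcases Nat.eq_zero_or_pos N with h0 | hN
    · subst h0; simp [hA0, hB0]
    · rw [hB N hN, hA N hN]
      rw [Finset.mul_sum, Finset.mul_sum, Finset.mul_sum]
      apply Finset.sum_congr rfl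
      intro n hn
      rw [Finset.mem_Icc] at hn
      have hsub : N - n < N := Nat.sub_lt hN hn.1
      rw [ih (N - n) hsub]
      have hcast : ((N - n : ℕ) : ℝ) = (N : ℝ) - (n : ℝ) :=
        Nat.cast_sub hn.2
      rw [hcast]
      have key : Real.exp (-C * ((n : ℝ) * ((N : ℝ) - (n : ℝ)) +
            (n : ℝ) * ((n : ℝ) - 1) / 2) - D * (n : ℝ)) *
          Real.exp (-C * (((N : ℝ) - (n : ℝ)) * (((N : ℝ) - (n : ℝ)) - 1) / 2) -
            D * ((N : ℝ) - (n : ℝ))) =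
          Real.exp (-C * ((N : ℝ) * ((N : ℝ) - 1) / 2) - D * (N : ℝ)) := by
        rw [← Real.exp_add]; congr 1; ring
      rw [← key]; ring
end
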